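/- arXiv:1410.5284 — 8 statements merged into one kernel-verified Lean document; each statement's English description precedes it below -/
import Mathlib

section
/- Under Assumptions 1, 2 and 3, the normalized stepsizes satisfy γ_*^k ≤ φ for all k = 1,2,…, and limsup_{k→∞} γ_*^k ≤ φ, where φ = 2(1−η)Q. -/
/-!
Every Hessian lies between `0` and `C • 1` in the Loewner order, and `H k m` is the sum of the
`k * m` Hessians evaluated so far, so `0 ≤ H k m ≤ (k * m * C) • 1`. With `d = x (k+1) 1 - x k 1`,
the numerator of `αstar k` is therefore at most `(1 - η) * k * m * ‖d‖ ^ 2`, while its denominator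
is at least `m / 2 * ‖d‖ ^ 2`; hence `0 ≤ αstar k ≤ 2 * (1 - η) * k ≤ 2 * (1 - η) * Q * k`.
The lower bound `0` makes the sequence cobounded, so the bound passes to the `limsup`.
-/

open Finset Filter Classical
open scoped MatrixOrder

namespace Matrix

variable {ι : Type*} [Fintype ι] [DecidableEq ι]

theorem inner_toEuclideanCLM_self_nonneg {M : Matrix ι ι ℝ} (hM : 0 ≤ M)
    (d : EuclideanSpace ℝ ι) : 0 ≤ inner ℝ d (toEuclideanCLM (𝕜 := ℝ) M d) :=
  (isPositive_toEuclideanLin_iff.mpr (nonneg_iff_posSemidef.mp hM)).inner_nonneg_right d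

theorem inner_toEuclideanCLM_self_le {M : Matrix ι ι ℝ} {t : ℝ} (hM : M ≤ t • 1)
    (d : EuclideanSpace ℝ ι) : inner ℝ d (toEuclideanCLM (𝕜 := ℝ) M d) ≤ t * ‖d‖ ^ 2 := by
  have h := inner_toEuclideanCLM_self_nonneg (sub_nonneg.mpr hM) d
  rw [map_sub, map_smul, map_one] at h
  simpa [inner_sub_right, inner_smul_right, real_inner_self_eq_norm_sq] using h

end Matrix

section Accumulate

variable {M : Type*} [AddCommMonoid M] [PartialOrder M] [IsOrderedAddMonoid M]
  {m : ℕ} {H A : ℕ → ℕ → M} {b : M}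

theorem accumulate_le_nsmul (h0 : H 1 0 = 0) (hnext : ∀ k, 1 ≤ k → H (k + 1) 0 = H k m)
    (hrec : ∀ k, 1 ≤ k → ∀ i ∈ Icc 1 m, H k i = H k (i - 1) + A k i)
    (hA : ∀ k, 1 ≤ k → ∀ i ∈ Icc 1 m, A k i ≤ b) (k : ℕ) {i : ℕ} (hi : i ≤ m) :
    H (k + 1) i ≤ (k * m + i) • b := by
  have step {k i j : ℕ} (hk : 1 ≤ k) (hi : i + 1 ≤ m) (h : H k i ≤ j • b) :
      H k (i + 1) ≤ (j + 1) • b := by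
    rw [hrec k hk (i + 1) (by simp [hi]), Nat.add_sub_cancel, succ_nsmul]
    exact add_le_add h (hA k hk _ (by simp [hi]))
  induction k generalizing i with
  | zero =>
    induction i with
    | zero => simp [h0]
    | succ i ih => exact step le_rfl hi (ih (by omega))
  | succ k ihk =>
    induction i with
    | zero => simpa [hnext _ (by omega : 1 ≤ k + 1), add_mul] using ihk le_rfl
    | succ i ih => exact step (by omega) hi (ih (by omega))

theorem nsmul_le_accumulate {a : M} (h0 : H 1 0 = 0) (hnext : ∀ k, 1 ≤ k → H (k + 1) 0 = H k m)
    (hrec : ∀ k, 1 ≤ k → ∀ i ∈ Icc 1 m, H k i = H k (i - 1) + A k i)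
    (hA : ∀ k, 1 ≤ k → ∀ i ∈ Icc 1 m, a ≤ A k i) (k : ℕ) {i : ℕ} (hi : i ≤ m) :
    (k * m + i) • a ≤ H (k + 1) i :=
  accumulate_le_nsmul (M := Mᵒᵈ) h0 hnext hrec hA k hi

end Accumulate

theorem div_le_two_mul_of_le_mul_sq {κ C m N r S t : ℝ} (hκ : 0 ≤ κ) (hC : 0 < C) (hm : 0 < m)
    (hr : 0 < r) (hS : 0 ≤ S) (hN : 0 ≤ N) (hNt : N ≤ t * m * C * r ^ 2) :
    κ / C * N / (r * S + m / 2 * r ^ 2) ≤ 2 * κ * t := by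
  have hden : 0 < m / 2 * r ^ 2 := by positivity
  calc κ / C * N / (r * S + m / 2 * r ^ 2)
      ≤ κ / C * (t * m * C * r ^ 2) / (m / 2 * r ^ 2) :=
        div_le_div₀ (mul_nonneg (by positivity) (hN.trans hNt)) (by gcongr) hden
          (le_add_of_nonneg_left (by positivity))
    _ = 2 * κ * t := by field_simp

theorem inner_toEuclideanCLM_ratio_mem_Icc {ι : Type*} [Fintype ι] [DecidableEq ι]
    {M : Matrix ι ι ℝ} {κ C m S t : ℝ} (hM₀ : 0 ≤ M) (hM : M ≤ (t * m * C) • 1) (hκ : 0 ≤ κ)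
    (hC : 0 < C) (hm : 0 < m) (hS : 0 ≤ S) {d : EuclideanSpace ℝ ι} (hd : d ≠ 0) :
    κ / C * inner ℝ d (Matrix.toEuclideanCLM (𝕜 := ℝ) M d) / (‖d‖ * S + m / 2 * ‖d‖ ^ 2)
      ∈ Set.Icc 0 (2 * κ * t) := by
  have hN := Matrix.inner_toEuclideanCLM_self_nonneg hM₀ d
  refine ⟨div_nonneg (mul_nonneg (div_nonneg hκ hC.le) hN)
    (add_nonneg (mul_nonneg (norm_nonneg d) hS) (mul_nonneg (by positivity) (sq_nonneg _))), ?_⟩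
  exact div_le_two_mul_of_le_mul_sq hκ hC hm (norm_pos_iff.mpr hd) hS hN
    (Matrix.inner_toEuclideanCLM_self_le hM d)

theorem statement2_general
    (n m : ℕ) (hm : 1 < m)
    (hess : ℕ → EuclideanSpace ℝ (Fin n) → Matrix (Fin n) (Fin n) ℝ)
    (x : ℕ → ℕ → EuclideanSpace ℝ (Fin n))
    (H : ℕ → ℕ → Matrix (Fin n) (Fin n) ℝ)
    (hH0 : H 1 0 = 0)
    (hHnext : ∀ k, 1 ≤ k → H (k+1) 0 = H k m)
    (hHrec : ∀ k, 1 ≤ k → ∀ i ∈ Finset.Icc 1 m, H k i = H k (i-1) + hess i (x k i))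
    (c C : ℝ) (hc : 0 < c) (hcC : c ≤ C)
    (hlb : ∀ i ∈ Finset.Icc 1 m, ∀ y, (hess i y - c • 1).PosSemidef)
    (hub : ∀ i ∈ Finset.Icc 1 m, ∀ y, (C • (1 : Matrix (Fin n) (Fin n) ℝ) - hess i y).PosSemidef)
    (η : ℝ) (hη : η ∈ Set.Ioo (0:ℝ) 1)
    (αstar : ℕ → ℝ)
    (hαstar : ∀ k, 1 ≤ k → αstar k =
      if x (k+1) 1 ≠ x k 1 then
        ((1 - η)/C) *
          (inner ℝ (x (k+1) 1 - x k 1) ((Matrix.toEuclideanCLM (𝕜 := ℝ) (H k m)) (x (k+1) 1 - x k 1)) : ℝ) /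
          (‖x (k+1) 1 - x k 1‖ * (∑ i ∈ Finset.Icc 2 m, ‖x k i - x k 1‖)
            + ((m : ℝ)/2) * ‖x (k+1) 1 - x k 1‖^2)
      else 0)
 :
    (∀ k, 1 ≤ k → αstar k / k ≤ 2 * (1 - η) * (C / c)) ∧
      Filter.limsup (fun k => αstar k / k) Filter.atTop ≤ 2 * (1 - η) * (C / c) := by
  have hC : 0 < C := hc.trans_le hcC
  have hκ : 0 ≤ 1 - η := sub_nonneg.mpr hη.2.le
  have hH_nonneg (k : ℕ) : 0 ≤ H (k + 1) m := by
    simpa using nsmul_le_accumulate hH0 hHnext hHrec (a := 0)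
      (fun _ _ i hi => (smul_nonneg hc.le zero_le_one).trans (hlb i hi _)) k le_rfl
  have hH_le (k : ℕ) : H (k + 1) m ≤ (((k + 1 : ℕ) : ℝ) * m * C) • 1 := by
    have h := accumulate_le_nsmul hH0 hHnext hHrec (fun _ _ i hi => hub i hi _) k le_rfl
    rwa [← Nat.cast_smul_eq_nsmul ℝ, smul_smul, ← add_one_mul, Nat.cast_mul] at h
  have hαstar_bounds : ∀ k : ℕ, 1 ≤ k → αstar k ∈ Set.Icc 0 (2 * (1 - η) * (k : ℝ)) := by
    intro k' hk'
    obtain ⟨k, rfl⟩ : ∃ k, k' = k + 1 := ⟨k' - 1, by omega⟩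
    rw [hαstar _ hk']
    split_ifs with hx
    · exact inner_toEuclideanCLM_ratio_mem_Icc (hH_nonneg k) (hH_le k) hκ hC
        (Nat.cast_pos.mpr (by omega)) (sum_nonneg fun _ _ => norm_nonneg _) (sub_ne_zero.mpr hx)
    · exact ⟨le_rfl, by positivity⟩
  have hbound : ∀ k, 1 ≤ k → αstar k / k ≤ 2 * (1 - η) * (C / c) := fun k hk =>
    calc αstar k / k ≤ 2 * (1 - η) :=
          div_le_of_le_mul₀ (Nat.cast_nonneg k) (by positivity) (hαstar_bounds k hk).2
      _ ≤ 2 * (1 - η) * (C / c) :=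
          le_mul_of_one_le_right (by positivity) ((one_le_div hc).mpr hcC)
  refine ⟨hbound, limsup_le_of_le (isCoboundedUnder_le_of_eventually_le _ (x := 0) ?_)
    (eventually_atTop.mpr ⟨1, hbound⟩)⟩
  exact eventually_atTop.mpr ⟨1, fun k hk => div_nonneg (hαstar_bounds k hk).1 k.cast_nonneg⟩

theorem statement2
    (n m : ℕ) (hm : 1 < m)
    (f : ℕ → EuclideanSpace ℝ (Fin n) → ℝ)
    (g : ℕ → EuclideanSpace ℝ (Fin n) → EuclideanSpace ℝ (Fin n))
    (hess : ℕ → EuclideanSpace ℝ (Fin n) → Matrix (Fin n) (Fin n) ℝ)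
    (hgrad : ∀ i ∈ Finset.Icc 1 m, ∀ y, HasGradientAt (f i) (g i y) y)
    (hhess : ∀ i ∈ Finset.Icc 1 m, ∀ y, HasFDerivAt (g i) (Matrix.toEuclideanCLM (𝕜 := ℝ) (hess i y)) y)
    (hcont : ∀ i ∈ Finset.Icc 1 m, Continuous (hess i))
    (α : ℕ → ℝ) (hα : ∀ k, 1 ≤ k → 0 < α k)
    (x : ℕ → ℕ → EuclideanSpace ℝ (Fin n))
    (H : ℕ → ℕ → Matrix (Fin n) (Fin n) ℝ)
    (hH0 : H 1 0 = 0)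
    (hHnext : ∀ k, 1 ≤ k → H (k+1) 0 = H k m)
    (hHrec : ∀ k, 1 ≤ k → ∀ i ∈ Finset.Icc 1 m, H k i = H k (i-1) + hess i (x k i))
    (hxnext : ∀ k, 1 ≤ k → x (k+1) 1 = x k (m+1))
    (hiter : ∀ k, 1 ≤ k → ∀ i ∈ Finset.Icc 1 m,
      x k (i+1) = x k i - α k • (Matrix.toEuclideanCLM (𝕜 := ℝ) (H k i)⁻¹) (g i (x k i)))
    (X : Set (EuclideanSpace ℝ (Fin n))) (hX : IsCompact X)
    (hbound : ∀ k, 1 ≤ k → ∀ i ∈ Finset.Icc 1 m, x k i ∈ X)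
    (c C : ℝ) (hc : 0 < c) (hcC : c ≤ C)
    (hlb : ∀ i ∈ Finset.Icc 1 m, ∀ y, (hess i y - c • 1).PosSemidef)
    (hub : ∀ i ∈ Finset.Icc 1 m, ∀ y, (C • (1 : Matrix (Fin n) (Fin n) ℝ) - hess i y).PosSemidef)
    (η : ℝ) (hη : η ∈ Set.Ioo (0:ℝ) 1)
    (αstar : ℕ → ℝ)
    (hαstar : ∀ k, 1 ≤ k → αstar k =
      if x (k+1) 1 ≠ x k 1 then
        ((1 - η)/C) *
          (inner ℝ (x (k+1) 1 - x k 1) ((Matrix.toEuclideanCLM (𝕜 := ℝ) (H k m)) (x (k+1) 1 - x k 1)) : ℝ) /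
          (‖x (k+1) 1 - x k 1‖ * (∑ i ∈ Finset.Icc 2 m, ‖x k i - x k 1‖)
            + ((m : ℝ)/2) * ‖x (k+1) 1 - x k 1‖^2)
      else 0)
    (hstep : ∀ k, 1 ≤ k → 1 ≤ α k ∧ α k ≤ max 1 (αstar k))
 :
    (∀ k, 1 ≤ k → αstar k / k ≤ 2 * (1 - η) * (C / c)) ∧
      Filter.limsup (fun k => αstar k / k) Filter.atTop ≤ 2 * (1 - η) * (C / c) :=
  statement2_general n m hm hess x H hH0 hHnext hHrec c C hc hcC hlb hub η hη αstar hαstar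
end

section
/- Under Assumptions 1, 2, 3 and 4, for each i = 1,…,m and all k ≥ 2, the IN iterates satisfy ‖x_i^k − x_1^k‖ ≤ γ^k B_i^k(φ) ‖∇f(x_1^k)‖, where B_i^k(φ) is defined by the recursion B_1^k(φ) = 0 and B_{i+1}^k(φ) = (1 + (2Q/m)·max(1/k, φ))·B_i^k(φ) + 2M/(cm); moreover the limits B_i(φ) := lim_{k→∞} B_i^k(φ) exist and satisfy B_1(φ) = 0 and B_{i+1}(φ) = (1 + (2Q/m)φ)·B_i(φ) + 2M/(cm). -/
/-!
The accumulated Hessian `H_i^k` is a sum of `(k-1)m + i` matrices lying between `cI` and `CI`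
in the Loewner order. Hence `‖(H_i^k)⁻¹‖ ≤ 1 / (((k-1)m + i)c) ≤ 2 / (kmc)` for `k ≥ 2`, and
`H_m^k ⪯ kmC·I`, which gives `α_*^k ≤ 2(1-η)k` and so `γ^k ≤ max(1/k, φ)`. Each `∇f_i` is
`C`-Lipschitz, so together with Assumption 4 one inner step gives
`‖x_{i+1}^k - x_1^k‖ ≤ (1 + (2Q/m)γ^k) ‖x_i^k - x_1^k‖ + γ^k (2M/(cm)) ‖∇f(x_1^k)‖`,
and induction on `i` compares these distances with the recursion defining `B_i^k(φ)`.
The limits exist because `max(1/k, φ) = φ` as soon as `k ≥ 1/φ`.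
-/

open Finset Filter Classical

noncomputable def Bseq (r s : ℝ) : ℕ → ℝ
  | 0 => 0
  | (i+1) => r * Bseq r s i + s

open scoped RealInnerProductSpace

theorem le_Bseq_mul {D : ℕ → ℝ} {r s K : ℝ} {N : ℕ} (hr : 0 ≤ r) (h0 : D 0 ≤ 0)
    (hstep : ∀ j < N, D (j + 1) ≤ r * D j + s * K) : ∀ j ≤ N, D j ≤ Bseq r s j * K
  | 0, _ => by simpa [Bseq] using h0
  | j + 1, hj =>
    calc D (j + 1) ≤ r * D j + s * K := hstep j hj
      _ ≤ r * (Bseq r s j * K) + s * K := by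
        gcongr
        exact le_Bseq_mul hr h0 hstep j (by omega)
      _ = Bseq r s (j + 1) * K := by simp only [Bseq]; ring

theorem eventually_max_one_div_eq {φ : ℝ} (hφ : 0 < φ) :
    ∀ᶠ k : ℕ in atTop, max (1 / (k : ℝ)) φ = φ :=
  (tendsto_one_div_atTop_nhds_zero_nat.eventually (eventually_le_nhds hφ)).mono
    fun _ hk => max_eq_right hk

theorem div_le_max_one_div {α β φ k : ℝ} (hk : 0 < k) (hα : α ≤ max 1 β) (hβ : β ≤ φ * k) :
    α / k ≤ max (1 / k) φ := by
  rw [div_le_iff₀ hk, max_mul_of_nonneg _ _ hk.le, one_div_mul_cancel hk.ne']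
  exact hα.trans (max_le_max le_rfl hβ)

theorem incremental_sum_bounds {A : Type*} [AddCommMonoid A] [PartialOrder A]
    [IsOrderedAddMonoid A] {m : ℕ} {S d : ℕ → ℕ → A} {a b : A}
    (h0 : S 1 0 = 0) (hnext : ∀ k, 1 ≤ k → S (k + 1) 0 = S k m)
    (hrec : ∀ k, 1 ≤ k → ∀ i ∈ Icc 1 m, S k i = S k (i - 1) + d k i)
    (hd : ∀ k, 1 ≤ k → ∀ i ∈ Icc 1 m, a ≤ d k i ∧ d k i ≤ b) :
    ∀ k, 1 ≤ k → ∀ i ≤ m,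
      ((k - 1) * m + i) • a ≤ S k i ∧ S k i ≤ ((k - 1) * m + i) • b := by
  have epoch : ∀ k, 1 ≤ k → ∀ t, t • a ≤ S k 0 ∧ S k 0 ≤ t • b →
      ∀ i ≤ m, (t + i) • a ≤ S k i ∧ S k i ≤ (t + i) • b := by
    intro k hk t ht i
    induction i with
    | zero => simpa using ht
    | succ i ih =>
      intro hi
      have hmem : i + 1 ∈ Icc 1 m := mem_Icc.2 ⟨by omega, hi⟩
      obtain ⟨hlo, hhi⟩ := ih (by omega)
      obtain ⟨hdlo, hdhi⟩ := hd k hk (i + 1) hmem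
      rw [hrec k hk (i + 1) hmem, Nat.add_sub_cancel, ← add_assoc, succ_nsmul, succ_nsmul]
      exact ⟨add_le_add hlo hdlo, add_le_add hhi hdhi⟩
  intro k hk
  induction k, hk using Nat.le_induction with
  | base => simpa using epoch 1 le_rfl 0 (by simp [h0])
  | succ k hk ih =>
    refine epoch (k + 1) (by omega) _ ?_
    have hkm : (k - 1) * m + m = k * m := by
      rw [Nat.sub_one_mul, Nat.sub_add_cancel (Nat.le_mul_of_pos_left m hk)]
    rw [hnext k hk, Nat.add_sub_cancel, ← hkm]
    exact ih m le_rfl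

namespace ContinuousLinearMap

instance {𝕜 E : Type*} [RCLike 𝕜] [NormedAddCommGroup E] [InnerProductSpace 𝕜 E] :
    IsOrderedAddMonoid (E →L[𝕜] E) where
  add_le_add_left _ _ hab _ := by simpa [le_def] using hab

variable {E : Type*} [NormedAddCommGroup E] [InnerProductSpace ℝ E] {T : E →L[ℝ] E}

theorem smul_one_nonneg {a : ℝ} (ha : 0 ≤ a) : 0 ≤ a • (1 : E →L[ℝ] E) :=
  (nonneg_iff_isPositive _).2 (isPositive_one.smul_of_nonneg ha)

theorem inner_map_self_le_of_le_smul_one {b : ℝ} (h : T ≤ b • 1) (x : E) :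
    ⟪x, T x⟫ ≤ b * ‖x‖ ^ 2 := by
  have := ((le_def _ _).1 h).inner_nonneg_right x
  simpa only [sub_apply, smul_apply, one_apply_eq_self, inner_sub_right, inner_smul_right,
    real_inner_self_eq_norm_sq, sub_nonneg] using this

theorem le_inner_map_self_of_smul_one_le {a : ℝ} (h : a • 1 ≤ T) (x : E) :
    a * ‖x‖ ^ 2 ≤ ⟪x, T x⟫ := by
  have := ((le_def _ _).1 h).inner_nonneg_right x
  simpa only [sub_apply, smul_apply, one_apply_eq_self, inner_sub_right, inner_smul_right,
    real_inner_self_eq_norm_sq, sub_nonneg] using this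

theorem mul_norm_le_norm_map_of_smul_one_le {a : ℝ} (h : a • 1 ≤ T) (x : E) :
    a * ‖x‖ ≤ ‖T x‖ := by
  rcases (norm_nonneg x).eq_or_lt with hx | hx
  · simp [← hx]
  · refine le_of_mul_le_mul_right ?_ hx
    calc a * ‖x‖ * ‖x‖ = a * ‖x‖ ^ 2 := by ring
      _ ≤ ⟪x, T x⟫ := le_inner_map_self_of_smul_one_le h x
      _ ≤ ‖x‖ * ‖T x‖ := real_inner_le_norm x (T x)
      _ = ‖T x‖ * ‖x‖ := mul_comm _ _

theorem norm_le_of_nonneg_of_le_smul_one {b : ℝ} (hb : 0 ≤ b) (h0 : 0 ≤ T) (h : T ≤ b • 1) :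
    ‖T‖ ≤ b := by
  rw [norm_eq_iSup_rayleighQuotient T ((nonneg_iff_isPositive T).1 h0).isSymmetric]
  refine ciSup_le fun x => abs_le.2 ⟨?_, ?_⟩
  · have := ((nonneg_iff_isPositive T).1 h0).inner_nonneg_left x
    simp only [rayleighQuotient, reApplyInnerSelf_apply, RCLike.re_to_real]
    linarith [div_nonneg this (sq_nonneg ‖x‖)]
  · simp only [rayleighQuotient, reApplyInnerSelf_apply, RCLike.re_to_real, real_inner_comm]
    exact div_le_of_le_mul₀ (sq_nonneg _) hb (inner_map_self_le_of_le_smul_one h x)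

end ContinuousLinearMap

open ContinuousLinearMap

theorem norm_sub_le_of_hasFDerivAt_le_smul_one {E : Type*} [NormedAddCommGroup E]
    [InnerProductSpace ℝ E] {g : E → E} {g' : E → E →L[ℝ] E} {C : ℝ} (hC : 0 ≤ C)
    (hg : ∀ y, HasFDerivAt g (g' y) y) (h0 : ∀ y, 0 ≤ g' y) (h : ∀ y, g' y ≤ C • 1)
    (y z : E) : ‖g y - g z‖ ≤ C * ‖y - z‖ :=
  convex_univ.norm_image_sub_le_of_norm_hasFDerivWithin_le (fun w _ => (hg w).hasFDerivWithinAt)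
    (fun w _ => norm_le_of_nonneg_of_le_smul_one hC (h0 w) (h w)) (Set.mem_univ z)
    (Set.mem_univ y)

namespace Matrix

variable {n : Type*} [Fintype n] [DecidableEq n]

theorem isPositive_toEuclideanCLM_iff {A : Matrix n n ℝ} :
    (toEuclideanCLM (𝕜 := ℝ) A).IsPositive ↔ A.PosSemidef := by
  rw [← ContinuousLinearMap.isPositive_toLinearMap_iff, coe_toEuclideanCLM_eq_toEuclideanLin,
    isPositive_toEuclideanLin_iff]

theorem toEuclideanCLM_le_toEuclideanCLM_iff {A B : Matrix n n ℝ} :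
    toEuclideanCLM (𝕜 := ℝ) A ≤ toEuclideanCLM (𝕜 := ℝ) B ↔ (B - A).PosSemidef := by
  rw [ContinuousLinearMap.le_def, ← map_sub, isPositive_toEuclideanCLM_iff]

theorem norm_toEuclideanCLM_inv_apply_le {A : Matrix n n ℝ} {a : ℝ} (ha : 0 < a)
    (hA : a • 1 ≤ toEuclideanCLM (𝕜 := ℝ) A) (y : EuclideanSpace ℝ n) :
    ‖toEuclideanCLM (𝕜 := ℝ) A⁻¹ y‖ ≤ ‖y‖ / a := by
  have hinj : Function.Injective (toEuclideanCLM (𝕜 := ℝ) A) := by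
    refine (injective_iff_map_eq_zero _).2 fun x hx => norm_eq_zero.1 ?_
    have := mul_norm_le_norm_map_of_smul_one_le hA x
    rw [hx, norm_zero] at this
    exact le_antisymm (nonpos_of_mul_nonpos_right this ha) (norm_nonneg x)
  have hunit : IsUnit A := mulVec_injective_iff_isUnit.1 fun v w hvw =>
    WithLp.toLp_injective 2 (hinj (by simp [hvw]))
  have hy : toEuclideanCLM (𝕜 := ℝ) A (toEuclideanCLM (𝕜 := ℝ) A⁻¹ y) = y := by
    rw [← mul_apply_eq_comp, ← map_mul, mul_nonsing_inv _ ((isUnit_iff_isUnit_det A).1 hunit),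
      map_one, one_apply_eq_self]
  rw [le_div_iff₀ ha, mul_comm]
  simpa [hy] using mul_norm_le_norm_map_of_smul_one_le hA (toEuclideanCLM (𝕜 := ℝ) A⁻¹ y)

end Matrix

open Matrix

theorem alphaStar_le {E : Type*} [NormedAddCommGroup E] [InnerProductSpace ℝ E] [DecidableEq E]
    {y y' : E} {P : E →L[ℝ] E} {η C S : ℝ} {k m : ℕ} (hm : 0 < m) (hη : η < 1) (hC : 0 < C)
    (hS : 0 ≤ S) (hP : P ≤ (k * m) • (C • 1)) :
    (if y' ≠ y then
        ((1 - η) / C) * ⟪y' - y, P (y' - y)⟫ / (‖y' - y‖ * S + ((m : ℝ) / 2) * ‖y' - y‖ ^ 2)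
      else 0) ≤ 2 * (1 - η) * k := by
  have hη' : 0 < 1 - η := sub_pos.2 hη
  split_ifs with hne
  · have hδ : 0 < ‖y' - y‖ := norm_pos_iff.2 (sub_ne_zero.2 hne)
    rw [← smul_assoc, nsmul_eq_mul] at hP
    have hN := inner_map_self_le_of_le_smul_one hP (y' - y)
    have hm' : (0 : ℝ) < m := by exact_mod_cast hm
    calc ((1 - η) / C) * ⟪y' - y, P (y' - y)⟫ / (‖y' - y‖ * S + ((m : ℝ) / 2) * ‖y' - y‖ ^ 2)
        ≤ ((1 - η) / C) * (((k * m : ℕ) : ℝ) * C * ‖y' - y‖ ^ 2)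
            / (((m : ℝ) / 2) * ‖y' - y‖ ^ 2) := by
          gcongr
          exact le_add_of_nonneg_left (by positivity)
      _ = 2 * (1 - η) * k := by push_cast; field_simp
  · positivity

theorem norm_sub_le_of_newton_step {n : Type*} [Fintype n] [DecidableEq n]
    {y y' z v : EuclideanSpace ℝ n} {A : Matrix n n ℝ} {α a b : ℝ} (ha : 0 < a) (hα : 0 ≤ α)
    (hy' : y' = y - α • toEuclideanCLM (𝕜 := ℝ) A⁻¹ v) (hA : a • 1 ≤ toEuclideanCLM (𝕜 := ℝ) A)
    (hv : ‖v‖ ≤ b) :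
    ‖y' - z‖ ≤ ‖y - z‖ + α * (b / a) := by
  rw [hy', sub_right_comm]
  calc ‖y - z - α • toEuclideanCLM (𝕜 := ℝ) A⁻¹ v‖
      ≤ ‖y - z‖ + α * ‖toEuclideanCLM (𝕜 := ℝ) A⁻¹ v‖ :=
        (norm_sub_le _ _).trans_eq (by rw [norm_smul, Real.norm_of_nonneg hα])
    _ ≤ ‖y - z‖ + α * (b / a) := by
        gcongr
        exact (norm_toEuclideanCLM_inv_apply_le ha hA v).trans (by gcongr)

-- `x` and `H` are the iterates and accumulated Hessians of the epoch `k`.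
theorem norm_iterate_sub_le_Bseq {n : Type*} [Fintype n] [DecidableEq n]
    {x : ℕ → EuclideanSpace ℝ n} {g : ℕ → EuclideanSpace ℝ n → EuclideanSpace ℝ n}
    {H : ℕ → Matrix n n ℝ} {k m : ℕ} {α c C M G μ : ℝ} (hk : 2 ≤ k) (hm : 0 < m) (hc : 0 < c)
    (hcC : c ≤ C) (hα : 0 ≤ α) (hγ : α / k ≤ μ)
    (hiter : ∀ i ∈ Icc 1 m, x (i + 1) = x i - α • toEuclideanCLM (𝕜 := ℝ) (H i)⁻¹ (g i (x i)))
    (hH : ∀ i ∈ Icc 1 m, ((k - 1) * m + i) • (c • 1) ≤ toEuclideanCLM (𝕜 := ℝ) (H i))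
    (hlip : ∀ i ∈ Icc 1 m, ∀ y z, ‖g i y - g i z‖ ≤ C * ‖y - z‖)
    (hg : ∀ i ∈ Icc 1 m, ‖g i (x 1)‖ ≤ M * G) :
    ∀ i ∈ Icc 1 m,
      ‖x i - x 1‖ ≤ α / k * Bseq (1 + (2 * (C / c) / m) * μ) (2 * M / (c * m)) (i - 1) * G := by
  set r := 1 + (2 * (C / c) / m) * μ with hr_def
  set s := 2 * M / (c * m) with hs_def
  have hk' : (2 : ℝ) ≤ k := by exact_mod_cast hk
  have hm' : (0 : ℝ) < m := by exact_mod_cast hm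
  have hμ : 0 ≤ μ := (by positivity : 0 ≤ α / k).trans hγ
  have hQ : 0 ≤ C / c := div_nonneg (hc.le.trans hcC) hc.le
  have hr : 0 ≤ r := by positivity
  have step : ∀ i ∈ Icc 1 m, ‖x (i + 1) - x 1‖ ≤ r * ‖x i - x 1‖ + s * (α / k * G) := by
    intro i hi
    set D := ‖x i - x 1‖
    have hden : (k : ℝ) * m * c / 2 ≤ (((k - 1) * m + i : ℕ) : ℝ) * c := by
      have : (k : ℝ) * m ≤ 2 * (((k - 1) * m + i : ℕ) : ℝ) := by
        push_cast [Nat.cast_sub (by omega : 1 ≤ k)]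
        nlinarith [mul_nonneg (sub_nonneg.2 hk') hm'.le, (Nat.cast_nonneg i : (0 : ℝ) ≤ i)]
      nlinarith
    have hgi : ‖g i (x i)‖ ≤ M * G + C * D :=
      calc ‖g i (x i)‖ ≤ ‖g i (x 1)‖ + ‖g i (x i) - g i (x 1)‖ := norm_le_insert' _ _
        _ ≤ M * G + C * D := add_le_add (hg i hi) (hlip i hi _ _)
    calc ‖x (i + 1) - x 1‖ ≤ D + α * ((M * G + C * D) / ((((k - 1) * m + i : ℕ) : ℝ) * c)) :=
          norm_sub_le_of_newton_step ((by positivity : (0 : ℝ) < k * m * c / 2).trans_le hden) hα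
            (hiter i hi) (by simpa only [← smul_assoc, nsmul_eq_mul] using hH i hi) hgi
      _ ≤ D + α * ((M * G + C * D) / ((k : ℝ) * m * c / 2)) := by
          have hb : 0 ≤ M * G + C * D := (norm_nonneg _).trans hgi
          gcongr
      _ = (1 + (2 * (C / c) / m) * (α / k)) * D + s * (α / k * G) := by
          rw [hs_def]; field_simp; ring
      _ ≤ r * D + s * (α / k * G) := by rw [hr_def]; gcongr
  intro i hi
  obtain ⟨hi1, him⟩ := mem_Icc.1 hi
  have := le_Bseq_mul (D := fun j => ‖x (j + 1) - x 1‖) (N := m - 1) hr (by simp)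
    (fun j hj => step (j + 1) (mem_Icc.2 ⟨by omega, by omega⟩)) (i - 1) (by omega)
  rw [Nat.sub_add_cancel hi1] at this
  linarith

theorem statement4_general
    (n m : ℕ) (hm : 1 < m)
    (g : ℕ → EuclideanSpace ℝ (Fin n) → EuclideanSpace ℝ (Fin n))
    (hess : ℕ → EuclideanSpace ℝ (Fin n) → Matrix (Fin n) (Fin n) ℝ)
    (hhess : ∀ i ∈ Finset.Icc 1 m, ∀ y, HasFDerivAt (g i) (Matrix.toEuclideanCLM (𝕜 := ℝ) (hess i y)) y)
    (α : ℕ → ℝ)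
    (x : ℕ → ℕ → EuclideanSpace ℝ (Fin n))
    (H : ℕ → ℕ → Matrix (Fin n) (Fin n) ℝ)
    (hH0 : H 1 0 = 0)
    (hHnext : ∀ k, 1 ≤ k → H (k+1) 0 = H k m)
    (hHrec : ∀ k, 1 ≤ k → ∀ i ∈ Finset.Icc 1 m, H k i = H k (i-1) + hess i (x k i))
    (hiter : ∀ k, 1 ≤ k → ∀ i ∈ Finset.Icc 1 m,
      x k (i+1) = x k i - α k • (Matrix.toEuclideanCLM (𝕜 := ℝ) (H k i)⁻¹) (g i (x k i)))
    (c C : ℝ) (hc : 0 < c) (hcC : c ≤ C)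
    (hlb : ∀ i ∈ Finset.Icc 1 m, ∀ y, (hess i y - c • 1).PosSemidef)
    (hub : ∀ i ∈ Finset.Icc 1 m, ∀ y, (C • (1 : Matrix (Fin n) (Fin n) ℝ) - hess i y).PosSemidef)
    (η : ℝ) (hη : η ∈ Set.Ioo (0:ℝ) 1)
    (αstar : ℕ → ℝ)
    (hαstar : ∀ k, 1 ≤ k → αstar k =
      if x (k+1) 1 ≠ x k 1 then
        ((1 - η)/C) *
          (inner ℝ (x (k+1) 1 - x k 1) ((Matrix.toEuclideanCLM (𝕜 := ℝ) (H k m)) (x (k+1) 1 - x k 1)) : ℝ) /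
          (‖x (k+1) 1 - x k 1‖ * (∑ i ∈ Finset.Icc 2 m, ‖x k i - x k 1‖)
            + ((m : ℝ)/2) * ‖x (k+1) 1 - x k 1‖^2)
      else 0)
    (hstep : ∀ k, 1 ≤ k → 1 ≤ α k ∧ α k ≤ max 1 (αstar k))
    (M : ℝ)
    (hgg : ∀ i ∈ Finset.Icc 1 m, ∀ y, ‖g i y‖ ≤ M * ‖∑ j ∈ Finset.Icc 1 m, g j y‖)
    (Q φ : ℝ) (hQ : Q = C / c) (hφ : φ = 2 * (1 - η) * Q) :
    (∀ k, 2 ≤ k → ∀ i ∈ Finset.Icc 1 m,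
      ‖x k i - x k 1‖ ≤ (α k / k) *
        Bseq (1 + (2*Q/m) * max (1/(k:ℝ)) φ) (2*M/(c*m)) (i-1) *
        ‖∑ i ∈ Finset.Icc 1 m, g i (x k 1)‖) ∧
    (∀ i ∈ Finset.Icc 1 m,
      Filter.Tendsto (fun k : ℕ => Bseq (1 + (2*Q/m) * max (1/(k:ℝ)) φ) (2*M/(c*m)) (i-1))
        Filter.atTop (nhds (Bseq (1 + (2*Q/m) * φ) (2*M/(c*m)) (i-1)))) := by
  subst hQ hφ
  have hQ1 : 1 ≤ C / c := (one_le_div hc).2 hcC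
  have hη' : 0 < 1 - η := sub_pos.2 hη.2
  have hm0 : 0 < m := by omega
  have hlo : ∀ i ∈ Icc 1 m, ∀ y, c • 1 ≤ toEuclideanCLM (𝕜 := ℝ) (hess i y) := fun i hi y => by
    simpa using toEuclideanCLM_le_toEuclideanCLM_iff.2 (hlb i hi y)
  have hhi : ∀ i ∈ Icc 1 m, ∀ y, toEuclideanCLM (𝕜 := ℝ) (hess i y) ≤ C • 1 := fun i hi y => by
    simpa using toEuclideanCLM_le_toEuclideanCLM_iff.2 (hub i hi y)
  have hlip : ∀ i ∈ Icc 1 m, ∀ y z, ‖g i y - g i z‖ ≤ C * ‖y - z‖ := fun i hi =>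
    norm_sub_le_of_hasFDerivAt_le_smul_one (hc.le.trans hcC) (hhess i hi)
      (fun y => (smul_one_nonneg hc.le).trans (hlo i hi y)) (hhi i hi)
  have hHbd := incremental_sum_bounds (S := fun k i => toEuclideanCLM (𝕜 := ℝ) (H k i))
    (by simp [hH0]) (fun k hk => by simp [hHnext k hk]) (fun k hk i hi => by simp [hHrec k hk i hi])
    (fun k hk i hi => ⟨hlo i hi (x k i), hhi i hi (x k i)⟩)
  have hγ : ∀ k, 1 ≤ k → α k / k ≤ max (1 / (k : ℝ)) (2 * (1 - η) * (C / c)) := by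
    intro k hk
    have hHm := (hHbd k hk m le_rfl).2
    rw [Nat.sub_one_mul, Nat.sub_add_cancel (Nat.le_mul_of_pos_left m hk)] at hHm
    refine div_le_max_one_div (by positivity) (hstep k hk).2 ?_
    rw [hαstar k hk]
    refine (alphaStar_le hm0 hη.2 (hc.trans_le hcC) (sum_nonneg fun _ _ => norm_nonneg _)
      hHm).trans ?_
    exact mul_le_mul_of_nonneg_right (le_mul_of_one_le_right (by positivity) hQ1) k.cast_nonneg
  refine ⟨fun k hk => ?_, fun i _ => ?_⟩
  · exact norm_iterate_sub_le_Bseq hk hm0 hc hcC (zero_le_one.trans (hstep k (by omega)).1)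
      (hγ k (by omega)) (hiter k (by omega)) (fun i hi => (hHbd k (by omega) i (mem_Icc.1 hi).2).1)
      hlip (fun i hi => hgg i hi _)
  · have hφ : 0 < 2 * (1 - η) * (C / c) := by positivity
    exact tendsto_const_nhds.congr'
      ((eventually_max_one_div_eq hφ).mono fun k hk => by simp only [hk])

theorem statement4
    (n m : ℕ) (hm : 1 < m)
    (f : ℕ → EuclideanSpace ℝ (Fin n) → ℝ)
    (g : ℕ → EuclideanSpace ℝ (Fin n) → EuclideanSpace ℝ (Fin n))
    (hess : ℕ → EuclideanSpace ℝ (Fin n) → Matrix (Fin n) (Fin n) ℝ)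
    (hgrad : ∀ i ∈ Finset.Icc 1 m, ∀ y, HasGradientAt (f i) (g i y) y)
    (hhess : ∀ i ∈ Finset.Icc 1 m, ∀ y, HasFDerivAt (g i) (Matrix.toEuclideanCLM (𝕜 := ℝ) (hess i y)) y)
    (hcont : ∀ i ∈ Finset.Icc 1 m, Continuous (hess i))
    (α : ℕ → ℝ) (hα : ∀ k, 1 ≤ k → 0 < α k)
    (x : ℕ → ℕ → EuclideanSpace ℝ (Fin n))
    (H : ℕ → ℕ → Matrix (Fin n) (Fin n) ℝ)
    (hH0 : H 1 0 = 0)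
    (hHnext : ∀ k, 1 ≤ k → H (k+1) 0 = H k m)
    (hHrec : ∀ k, 1 ≤ k → ∀ i ∈ Finset.Icc 1 m, H k i = H k (i-1) + hess i (x k i))
    (hxnext : ∀ k, 1 ≤ k → x (k+1) 1 = x k (m+1))
    (hiter : ∀ k, 1 ≤ k → ∀ i ∈ Finset.Icc 1 m,
      x k (i+1) = x k i - α k • (Matrix.toEuclideanCLM (𝕜 := ℝ) (H k i)⁻¹) (g i (x k i)))
    (X : Set (EuclideanSpace ℝ (Fin n))) (hX : IsCompact X)
    (hbound : ∀ k, 1 ≤ k → ∀ i ∈ Finset.Icc 1 m, x k i ∈ X)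
    (c C : ℝ) (hc : 0 < c) (hcC : c ≤ C)
    (hlb : ∀ i ∈ Finset.Icc 1 m, ∀ y, (hess i y - c • 1).PosSemidef)
    (hub : ∀ i ∈ Finset.Icc 1 m, ∀ y, (C • (1 : Matrix (Fin n) (Fin n) ℝ) - hess i y).PosSemidef)
    (η : ℝ) (hη : η ∈ Set.Ioo (0:ℝ) 1)
    (αstar : ℕ → ℝ)
    (hαstar : ∀ k, 1 ≤ k → αstar k =
      if x (k+1) 1 ≠ x k 1 then
        ((1 - η)/C) *
          (inner ℝ (x (k+1) 1 - x k 1) ((Matrix.toEuclideanCLM (𝕜 := ℝ) (H k m)) (x (k+1) 1 - x k 1)) : ℝ) /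
          (‖x (k+1) 1 - x k 1‖ * (∑ i ∈ Finset.Icc 2 m, ‖x k i - x k 1‖)
            + ((m : ℝ)/2) * ‖x (k+1) 1 - x k 1‖^2)
      else 0)
    (hstep : ∀ k, 1 ≤ k → 1 ≤ α k ∧ α k ≤ max 1 (αstar k))
    (M : ℝ) (hM : 0 < M)
    (hgg : ∀ i ∈ Finset.Icc 1 m, ∀ y, ‖g i y‖ ≤ M * ‖∑ j ∈ Finset.Icc 1 m, g j y‖)
    (Q φ : ℝ) (hQ : Q = C / c) (hφ : φ = 2 * (1 - η) * Q) :
    (∀ k, 2 ≤ k → ∀ i ∈ Finset.Icc 1 m,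
      ‖x k i - x k 1‖ ≤ (α k / k) *
        Bseq (1 + (2*Q/m) * max (1/(k:ℝ)) φ) (2*M/(c*m)) (i-1) *
        ‖∑ i ∈ Finset.Icc 1 m, g i (x k 1)‖) ∧
    (∀ i ∈ Finset.Icc 1 m,
      Filter.Tendsto (fun k : ℕ => Bseq (1 + (2*Q/m) * max (1/(k:ℝ)) φ) (2*M/(c*m)) (i-1))
        Filter.atTop (nhds (Bseq (1 + (2*Q/m) * φ) (2*M/(c*m)) (i-1)))) :=
  statement4_general n m hm g hess hhess α x H hH0 hHnext hHrec hiter c C hc hcC hlb hub η hη αstar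
    hαstar hstep M hgg Q φ hQ hφ
end

section
/- (Local linear convergence of inexact perturbed Newton methods) Let F : ℝ^n → ℝ^n and suppose: there exists y* with F(y*) = 0; F is differentiable on a neighborhood of y* with Jacobian F' continuous at y*; F'(y*) is invertible. Consider iterates y^{k+1} = y^k + s^k where s^k solves (F'(y^k) + Δ_k)s^k = −F(y^k) + δ_k, with the matrices F'(y^k) + Δ_k nonsingular for all k. Given constants 0 ≤ ξ_k ≤ ξ̄ < t < 1, there exists ε > 0 such that if ‖y^1 − y*‖ ≤ ε and the iterates satisfy ‖Δ_k (F'(y^k)+Δ_k)^{-1} F(y^k) + (I − Δ_k (F'(y^k)+Δ_k)^{-1}) δ_k‖ ≤ ξ_k ‖F(y^k)‖ for all k, then ‖F'(y*)(y^{k+1} − y*)‖ ≤ t·‖F'(y*)(y^k − y*)‖ for all k = 1,2,…. -/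
set_option maxHeartbeats 1000000
set_option synthInstance.maxHeartbeats 200000


open Finset Filter Classical

theorem statement6 (n : ℕ)
    (F : EuclideanSpace ℝ (Fin n) → EuclideanSpace ℝ (Fin n))
    (F' : EuclideanSpace ℝ (Fin n) → (EuclideanSpace ℝ (Fin n) →L[ℝ] EuclideanSpace ℝ (Fin n)))
    (ystar : EuclideanSpace ℝ (Fin n))
    (hroot : F ystar = 0)
    (hdiff : ∀ᶠ y in nhds ystar, HasFDerivAt F (F' y) y)
    (hcont : ContinuousAt F' ystar)
    (hinv : IsUnit (F' ystar))
    (ξ : ℕ → ℝ) (ξbar t : ℝ)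
    (hξ : ∀ k, 1 ≤ k → 0 ≤ ξ k ∧ ξ k ≤ ξbar) (hξt : ξbar < t) (ht : t < 1) :
    ∃ ε : ℝ, 0 < ε ∧
      ∀ (y s : ℕ → EuclideanSpace ℝ (Fin n)) (Δ : ℕ → (EuclideanSpace ℝ (Fin n) →L[ℝ] EuclideanSpace ℝ (Fin n))) (δ : ℕ → EuclideanSpace ℝ (Fin n)),
        (∀ k, 1 ≤ k → IsUnit (F' (y k) + Δ k)) →
        (∀ k, 1 ≤ k → (F' (y k) + Δ k) (s k) = -F (y k) + δ k) →
        (∀ k, 1 ≤ k → y (k+1) = y k + s k) →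
        ‖y 1 - ystar‖ ≤ ε →
        (∀ k, 1 ≤ k →
          ‖(Δ k) ((Ring.inverse (F' (y k) + Δ k)) (F (y k))) +
            (δ k - (Δ k) ((Ring.inverse (F' (y k) + Δ k)) (δ k)))‖ ≤ ξ k * ‖F (y k)‖) →
        ∀ k, 1 ≤ k → ‖(F' ystar) (y (k+1) - ystar)‖ ≤ t * ‖(F' ystar) (y k - ystar)‖ := by
  classical
  set A := F' ystar with hAdef
  set iA := Ring.inverse A with hiAdef
  have hiA : ∀ z, iA (A z) = z := by
    intro z
    have h1 : (iA * A) z = (1 : EuclideanSpace ℝ (Fin n) →L[ℝ] EuclideanSpace ℝ (Fin n)) z := by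
      rw [hiAdef, Ring.inverse_mul_cancel A hinv]
    simpa [ContinuousLinearMap.mul_apply, ContinuousLinearMap.one_apply] using h1
  set M := ‖iA‖ with hMdef
  have hM0 : 0 ≤ M := norm_nonneg _
  have hzb : ∀ z : EuclideanSpace ℝ (Fin n), ‖z‖ ≤ M * ‖A z‖ := by
    intro z
    calc ‖z‖ = ‖iA (A z)‖ := by rw [hiA]
    _ ≤ M * ‖A z‖ := iA.le_opNorm _
  have hξbar0 : 0 ≤ ξbar := le_trans (hξ 1 le_rfl).1 (hξ 1 le_rfl).2
  have ht0 : 0 < t := lt_of_le_of_lt hξbar0 hξt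
  set γ := (t - ξbar) / ((ξbar + 2 + t) * (M + 1)) with hγdef
  have hden : 0 < (ξbar + 2 + t) * (M + 1) := by positivity
  have hγ0 : 0 < γ := div_pos (by linarith) hden
  have hγeq : γ * ((ξbar + 2 + t) * (M + 1)) = t - ξbar := by
    rw [hγdef]; field_simp
  have hkey : γ * M * (ξbar + 2 + t) ≤ t - ξbar := by nlinarith [hγ0.le, hM0]
  have hγM1 : γ * M < 1 := by nlinarith [hγ0.le, hM0]
  -- differentiability and continuity estimates
  have hF0 : HasFDerivAt F A ystar := hdiff.self_of_nhds
  have hlo : (fun x => F x - F ystar - A (x - ystar)) =o[nhds ystar] fun x => x - ystar :=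
    hF0.isLittleO
  have hE1 : ∀ᶠ x in nhds ystar, ‖F x - A (x - ystar)‖ ≤ γ * ‖x - ystar‖ := by
    filter_upwards [hlo.def hγ0] with x hx
    simpa [hroot] using hx
  have hE2 : ∀ᶠ x in nhds ystar, ‖F' x - A‖ < γ := by
    have := Metric.tendsto_nhds.mp hcont γ hγ0
    filter_upwards [this] with x hx
    rwa [dist_eq_norm] at hx
  obtain ⟨ρ, hρ0, hρ⟩ := Metric.eventually_nhds_iff.mp (hE1.and hE2)
  set K := M * ‖A‖ with hKdef
  have hK0 : 0 ≤ K := mul_nonneg hM0 (norm_nonneg _)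
  refine ⟨ρ / (2 * (K + 1)), by positivity, ?_⟩
  intro y s Δ δ hunit heq hup hinit hres
  set ε := ρ / (2 * (K + 1)) with hεdef
  have hε0 : 0 < ε := by positivity
  have hKε : K * ε < ρ := by
    have h1 : (K + 1) * ε = ρ / 2 := by
      rw [hεdef]; field_simp
    nlinarith [hK0, hρ0, hε0.le]
  -- key step
  have key : ∀ k, 1 ≤ k → ‖A (y k - ystar)‖ ≤ ‖A (y 1 - ystar)‖ →
      ‖A (y (k+1) - ystar)‖ ≤ t * ‖A (y k - ystar)‖ := by
    intro k hk hle
    set v := ‖A (y k - ystar)‖ with hvdef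
    set u := ‖A (y (k+1) - ystar)‖ with hudef
    have hv0 : 0 ≤ v := norm_nonneg _
    have hu0 : 0 ≤ u := norm_nonneg _
    have hykb : ‖y k - ystar‖ ≤ M * v := hzb _
    have hMv : M * v ≤ K * ε := by
      have hv1 : v ≤ ‖A‖ * ε :=
        le_trans hle (le_trans (A.le_opNorm _)
          (mul_le_mul_of_nonneg_left hinit (norm_nonneg _)))
      calc M * v ≤ M * (‖A‖ * ε) := mul_le_mul_of_nonneg_left hv1 hM0
      _ = K * ε := by rw [hKdef]; ring
    have hykρ : dist (y k) ystar < ρ := by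
      rw [dist_eq_norm]
      exact lt_of_le_of_lt (le_trans hykb hMv) hKε
    obtain ⟨hd_k, hc_k⟩ := hρ hykρ
    -- bound on ‖F (y k)‖
    have hFk : ‖F (y k)‖ ≤ v + γ * (M * v) := by
      calc ‖F (y k)‖ = ‖A (y k - ystar) + (F (y k) - A (y k - ystar))‖ := by
            congr 1; abel
      _ ≤ v + ‖F (y k) - A (y k - ystar)‖ := norm_add_le _ _
      _ ≤ v + γ * ‖y k - ystar‖ := by linarith [hd_k]
      _ ≤ v + γ * (M * v) := by nlinarith [hγ0.le]
    -- the residual identity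
    set B := F' (y k) + Δ k with hBdef
    have hB : IsUnit B := hunit k hk
    have hBs : B (s k) = -F (y k) + δ k := heq k hk
    have hs : s k = (Ring.inverse B) (-F (y k) + δ k) := by
      have h1 : (Ring.inverse B * B) (s k)
          = (Ring.inverse B) (-F (y k) + δ k) := by
        rw [ContinuousLinearMap.mul_apply, hBs]
      rwa [Ring.inverse_mul_cancel B hB, ContinuousLinearMap.one_apply] at h1
    have h2 : (F' (y k)) (s k) = -F (y k) + δ k - (Δ k) (s k) := by
      have h1 : (F' (y k)) (s k) + (Δ k) (s k) = -F (y k) + δ k := by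
        have := hBs
        rwa [hBdef, ContinuousLinearMap.add_apply] at this
      exact eq_sub_of_add_eq h1
    have h3 : (Δ k) (s k) = -((Δ k) ((Ring.inverse B) (F (y k))))
        + (Δ k) ((Ring.inverse B) (δ k)) := by
      rw [hs]
      simp [map_add, map_neg]
    have hr : F (y k) + (F' (y k)) (s k)
        = (Δ k) ((Ring.inverse B) (F (y k)))
          + (δ k - (Δ k) ((Ring.inverse B) (δ k))) := by
      rw [h2, h3]; abel
    have hrb : ‖F (y k) + (F' (y k)) (s k)‖ ≤ ξbar * ‖F (y k)‖ := by
      rw [hr]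
      exact le_trans (hres k hk)
        (mul_le_mul_of_nonneg_right (hξ k hk).2 (norm_nonneg _))
    -- decomposition
    have hy1 : y (k+1) - ystar = (y k - ystar) + s k := by
      rw [hup k hk]; abel
    have hAid : A (y (k+1) - ystar)
        = (F (y k) + (F' (y k)) (s k)) + ((A - F' (y k)) (s k))
          + (A (y k - ystar) - F (y k)) := by
      rw [hy1, map_add]
      simp only [ContinuousLinearMap.sub_apply]
      abel
    have hsb : ‖s k‖ ≤ M * u + M * v := by
      have h1 : s k = (y (k+1) - ystar) - (y k - ystar) := by
        rw [hy1]; abel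
      calc ‖s k‖ ≤ ‖y (k+1) - ystar‖ + ‖y k - ystar‖ := by
            rw [h1]; exact norm_sub_le _ _
      _ ≤ M * u + M * v := add_le_add (hzb _) (hzb _)
    have hterm2 : ‖(A - F' (y k)) (s k)‖ ≤ γ * (M * u + M * v) := by
      calc ‖(A - F' (y k)) (s k)‖ ≤ ‖A - F' (y k)‖ * ‖s k‖ :=
            (A - F' (y k)).le_opNorm _
      _ ≤ γ * (M * u + M * v) := by
        have h1 : ‖A - F' (y k)‖ ≤ γ := by
          rw [norm_sub_rev]; exact hc_k.le
        have h2 : (0:ℝ) ≤ M * u + M * v := by positivity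
        nlinarith [norm_nonneg (A - F' (y k)), norm_nonneg (s k), hsb]
    have hterm3 : ‖A (y k - ystar) - F (y k)‖ ≤ γ * (M * v) := by
      calc ‖A (y k - ystar) - F (y k)‖ = ‖F (y k) - A (y k - ystar)‖ := norm_sub_rev _ _
      _ ≤ γ * ‖y k - ystar‖ := hd_k
      _ ≤ γ * (M * v) := mul_le_mul_of_nonneg_left hykb hγ0.le
    have humain : u ≤ ξbar * (v + γ * (M * v)) + γ * (M * u + M * v) + γ * (M * v) := by
      calc u = ‖(F (y k) + (F' (y k)) (s k)) + ((A - F' (y k)) (s k))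
          + (A (y k - ystar) - F (y k))‖ := by rw [hudef, hAid]
      _ ≤ ‖F (y k) + (F' (y k)) (s k)‖ + ‖(A - F' (y k)) (s k)‖
          + ‖A (y k - ystar) - F (y k)‖ := norm_add₃_le
      _ ≤ ξbar * (v + γ * (M * v)) + γ * (M * u + M * v) + γ * (M * v) := by
        have := le_trans hrb (mul_le_mul_of_nonneg_left hFk hξbar0)
        linarith [hterm2, hterm3]
    nlinarith [hkey, hγM1, hv0, hu0, hγ0.le, hM0, mul_nonneg hγ0.le hM0,
      mul_nonneg (mul_nonneg hγ0.le hM0) hv0]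
  -- induction
  have hmono : ∀ k, 1 ≤ k → ‖A (y k - ystar)‖ ≤ ‖A (y 1 - ystar)‖ := by
    intro k hk
    induction k with
    | zero => omega
    | succ m ih =>
      rcases Nat.lt_or_ge m 1 with hm | hm
      · interval_cases m
        · exact le_rfl
      · have hPm := ih hm
        have := key m hm hPm
        have hv0 : 0 ≤ ‖A (y m - ystar)‖ := norm_nonneg _
        nlinarith
  intro k hk
  exact key k hk (hmono k hk)
end

section
/- Suppose Assumptions 1 and 2 hold and let δ_j^k := ‖∇f_j(x_j^k) − ∇f_j(x_1^k)‖ for j = 1,…,m. Then for all k ≥ 2 and j = 1,…,m, δ_j^k ≤ r^k · Σ_{i=1}^{j−1} (1 + r^k)^{j−1−i} ‖∇f_i(x_1^k)‖, where r^k = (2Q/m)·γ^k (with the convention that the right-hand side is zero for j = 1). -/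
/-!
In epoch `k ≥ 2` the aggregated Hessian `H k i` already contains `(k - 1) m` Hessians, each
`⪰ c I`, so every inverse-Hessian step moves the iterate by at most `α / ((k - 1) m c)` times the
current gradient. As each gradient is `C`-Lipschitz, `δ_j ≤ r · Σ_{i<j} ‖∇f_i(x_i)‖
≤ r · Σ_{i<j} (‖∇f_i(x_1)‖ + δ_i)` (here `k ≥ 2` gives `C / ((k - 1) m c) ≤ 2Q / (m k)`), and a
discrete Grönwall argument turns this recursive bound into the geometric one.
-/

open Finset
open scoped MatrixOrder InnerProductSpace

namespace Matrix
variable {ι : Type*} [Fintype ι] [DecidableEq ι]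

theorem inner_toEuclideanCLM_le_of_le {A B : Matrix ι ι ℝ} (h : A ≤ B) (x : EuclideanSpace ℝ ι) :
    ⟪toEuclideanCLM (𝕜 := ℝ) A x, x⟫_ℝ ≤ ⟪toEuclideanCLM (𝕜 := ℝ) B x, x⟫_ℝ := by
  have := (isPositive_toEuclideanLin_iff.mpr h).inner_nonneg_left x
  rw [← coe_toEuclideanCLM_eq_toEuclideanLin, map_sub] at this
  simpa [inner_sub_left] using this

theorem inner_toEuclideanCLM_smul_one (c : ℝ) (x : EuclideanSpace ℝ ι) :
    ⟪toEuclideanCLM (𝕜 := ℝ) (c • (1 : Matrix ι ι ℝ)) x, x⟫_ℝ = c * ‖x‖ ^ 2 := by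
  simp [real_inner_smul_left]

theorem norm_toEuclideanCLM_le {A : Matrix ι ι ℝ} {C : ℝ} (hC : 0 ≤ C) (hA : 0 ≤ A)
    (hAC : A ≤ C • 1) : ‖toEuclideanCLM (𝕜 := ℝ) A‖ ≤ C := by
  have hsymm := isSymmetric_toEuclideanLin_iff.mpr (nonneg_iff_posSemidef.mp hA).isHermitian
  rw [← coe_toEuclideanCLM_eq_toEuclideanLin] at hsymm
  rw [ContinuousLinearMap.norm_eq_iSup_rayleighQuotient _ hsymm]
  refine ciSup_le fun x => ?_
  have h0 : 0 ≤ ⟪toEuclideanCLM (𝕜 := ℝ) A x, x⟫_ℝ := by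
    simpa using inner_toEuclideanCLM_le_of_le hA x
  have h1 := inner_toEuclideanCLM_smul_one C x ▸ inner_toEuclideanCLM_le_of_le hAC x
  rw [ContinuousLinearMap.rayleighQuotient, ContinuousLinearMap.reApplyInnerSelf_apply,
    RCLike.re_to_real, abs_div, abs_of_nonneg h0, abs_sq]
  exact div_le_of_le_mul₀ (by positivity) hC h1

theorem norm_toEuclideanCLM_inv_le {A : Matrix ι ι ℝ} {μ : ℝ} (hμ : 0 < μ) (h : μ • 1 ≤ A) :
    ‖toEuclideanCLM (𝕜 := ℝ) A⁻¹‖ ≤ μ⁻¹ := by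
  have hA : A.PosDef := by
    simpa using (PosDef.one.smul hμ).add_posSemidef (le_iff.mp h)
  refine ContinuousLinearMap.opNorm_le_bound _ (by positivity) fun x => ?_
  set y := toEuclideanCLM (𝕜 := ℝ) A⁻¹ x
  have hAy : toEuclideanCLM (𝕜 := ℝ) A y = x := by
    rw [← mul_apply_eq_comp, ← map_mul,
      mul_nonsing_inv _ ((isUnit_iff_isUnit_det A).mp hA.isUnit), map_one]
    rfl
  have key : μ * ‖y‖ ^ 2 ≤ ‖x‖ * ‖y‖ :=
    calc μ * ‖y‖ ^ 2 = ⟪toEuclideanCLM (𝕜 := ℝ) (μ • (1 : Matrix ι ι ℝ)) y, y⟫_ℝ :=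
          (inner_toEuclideanCLM_smul_one μ y).symm
      _ ≤ ⟪toEuclideanCLM (𝕜 := ℝ) A y, y⟫_ℝ := inner_toEuclideanCLM_le_of_le h y
      _ ≤ ‖x‖ * ‖y‖ := hAy ▸ real_inner_le_norm _ _
  rw [le_inv_mul_iff₀ hμ]
  nlinarith [norm_nonneg y, norm_nonneg x]

end Matrix

theorem nsmul_le_of_cyclic_accumulation {β : Type*} [AddCommMonoid β] [PartialOrder β]
    [IsOrderedAddMonoid β] {m : ℕ} {A B : ℕ → ℕ → β} {e : β}
    (h0 : A 1 0 = 0) (hnext : ∀ k, 1 ≤ k → A (k + 1) 0 = A k m)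
    (hrec : ∀ k, 1 ≤ k → ∀ i ∈ Icc 1 m, A k i = A k (i - 1) + B k i)
    (hB : ∀ k, 1 ≤ k → ∀ i ∈ Icc 1 m, e ≤ B k i) :
    ∀ k, 1 ≤ k → ∀ i ≤ m, ((k - 1) * m + i) • e ≤ A k i := by
  have epoch : ∀ k, 1 ≤ k → ∀ N, N • e ≤ A k 0 → ∀ i ≤ m, (N + i) • e ≤ A k i := by
    intro k hk N hN i
    induction i with
    | zero => simpa using hN
    | succ i ih =>
      intro hi
      have hi' : i + 1 ∈ Icc 1 m := mem_Icc.mpr ⟨by omega, hi⟩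
      rw [← add_assoc, succ_nsmul, hrec k hk _ hi', Nat.add_sub_cancel]
      exact add_le_add (ih (by omega)) (hB k hk _ hi')
  intro k hk
  induction k, hk using Nat.le_induction with
  | base => simpa using epoch 1 le_rfl 0 (by simp [h0])
  | succ k hk ih =>
    refine epoch (k + 1) (by omega) _ ?_
    rw [hnext k hk, Nat.add_sub_cancel, show k * m = (k - 1) * m + m by
      rw [← Nat.succ_mul, Nat.succ_eq_add_one, Nat.sub_add_cancel hk]]
    exact ih m le_rfl

theorem le_mul_sum_pow_of_le_mul_sum_add {r : ℝ} (hr : 0 ≤ r) {G D : ℕ → ℝ} {m : ℕ}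
    (h : ∀ j ∈ Icc 1 m, D j ≤ r * ∑ i ∈ Icc 1 (j - 1), (G i + D i)) :
    ∀ j ∈ Icc 1 m, D j ≤ r * ∑ i ∈ Icc 1 (j - 1), (1 + r) ^ (j - 1 - i) * G i := by
  have partial_sum : ∀ t < m,
      ∑ i ∈ Icc 1 t, (G i + D i) ≤ ∑ i ∈ Icc 1 t, (1 + r) ^ (t - i) * G i := by
    intro t
    induction t with
    | zero => simp
    | succ t ih =>
      intro ht
      have hD := h (t + 1) (mem_Icc.mpr ⟨by omega, by omega⟩)
      rw [Nat.add_sub_cancel] at hD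
      have hpow : ∑ i ∈ Icc 1 t, (1 + r) ^ (t + 1 - i) * G i
          = (1 + r) * ∑ i ∈ Icc 1 t, (1 + r) ^ (t - i) * G i := by
        rw [mul_sum]
        refine sum_congr rfl fun i hi => ?_
        rw [Nat.sub_add_comm (mem_Icc.mp hi).2, pow_succ]
        ring
      rw [sum_Icc_succ_top (by omega), sum_Icc_succ_top (by omega), hpow, Nat.sub_self,
        pow_zero, one_mul]
      nlinarith [ih (by omega)]
  intro j hj
  obtain ⟨hj1, hjm⟩ := mem_Icc.mp hj
  exact (h j hj).trans (mul_le_mul_of_nonneg_left (partial_sum (j - 1) (by omega)) hr)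

theorem norm_sub_le_of_incremental_steps {E F : Type*} [SeminormedAddCommGroup E]
    [SeminormedAddCommGroup F] {g : ℕ → E → F} {y : ℕ → E} {m : ℕ} {L ρ r : ℝ}
    (hL : 0 ≤ L) (hr : 0 ≤ r) (hLρ : L * ρ ≤ r)
    (hlip : ∀ i ∈ Icc 1 m, ∀ a b, ‖g i a - g i b‖ ≤ L * ‖a - b‖)
    (hstep : ∀ i ∈ Icc 1 m, ‖y i - y (i + 1)‖ ≤ ρ * ‖g i (y i)‖) :
    ∀ j ∈ Icc 1 m, ‖g j (y j) - g j (y 1)‖ ≤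
      r * ∑ i ∈ Icc 1 (j - 1), (1 + r) ^ (j - 1 - i) * ‖g i (y 1)‖ := by
  refine le_mul_sum_pow_of_le_mul_sum_add hr fun j hj => ?_
  obtain ⟨hj1, hjm⟩ := mem_Icc.mp hj
  have hIco : Ico 1 j = Icc 1 (j - 1) := by
    ext i; simp only [mem_Ico, mem_Icc]; omega
  have hdist : ‖y j - y 1‖ ≤ ρ * ∑ i ∈ Icc 1 (j - 1), ‖g i (y i)‖ := by
    rw [← dist_eq_norm, dist_comm, mul_sum, ← hIco]
    refine (dist_le_Ico_sum_dist y hj1).trans (sum_le_sum fun i hi => ?_)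
    rw [dist_eq_norm]
    exact hstep i (mem_Icc.mpr ⟨(mem_Ico.mp hi).1, (mem_Ico.mp hi).2.le.trans hjm⟩)
  have hgrad_le : ∑ i ∈ Icc 1 (j - 1), ‖g i (y i)‖ ≤
      ∑ i ∈ Icc 1 (j - 1), (‖g i (y 1)‖ + ‖g i (y i) - g i (y 1)‖) :=
    sum_le_sum fun i _ => norm_le_norm_add_norm_sub' _ _
  have hsum_nonneg : 0 ≤ ∑ i ∈ Icc 1 (j - 1), ‖g i (y i)‖ :=
    sum_nonneg fun i _ => norm_nonneg _
  calc ‖g j (y j) - g j (y 1)‖ ≤ L * ‖y j - y 1‖ := hlip j hj _ _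
    _ ≤ L * (ρ * ∑ i ∈ Icc 1 (j - 1), ‖g i (y i)‖) := mul_le_mul_of_nonneg_left hdist hL
    _ = L * ρ * ∑ i ∈ Icc 1 (j - 1), ‖g i (y i)‖ := (mul_assoc _ _ _).symm
    _ ≤ r * ∑ i ∈ Icc 1 (j - 1), (‖g i (y 1)‖ + ‖g i (y i) - g i (y 1)‖) :=
      mul_le_mul hLρ hgrad_le hsum_nonneg hr

theorem statement8_general
    (n m : ℕ)
    (g : ℕ → EuclideanSpace ℝ (Fin n) → EuclideanSpace ℝ (Fin n))
    (hess : ℕ → EuclideanSpace ℝ (Fin n) → Matrix (Fin n) (Fin n) ℝ)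
    (hhess : ∀ i ∈ Finset.Icc 1 m, ∀ y, HasFDerivAt (g i) (Matrix.toEuclideanCLM (𝕜 := ℝ) (hess i y)) y)
    (α : ℕ → ℝ) (hα : ∀ k, 1 ≤ k → 0 < α k)
    (x : ℕ → ℕ → EuclideanSpace ℝ (Fin n))
    (H : ℕ → ℕ → Matrix (Fin n) (Fin n) ℝ)
    (hH0 : H 1 0 = 0)
    (hHnext : ∀ k, 1 ≤ k → H (k+1) 0 = H k m)
    (hHrec : ∀ k, 1 ≤ k → ∀ i ∈ Finset.Icc 1 m, H k i = H k (i-1) + hess i (x k i))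
    (hiter : ∀ k, 1 ≤ k → ∀ i ∈ Finset.Icc 1 m,
      x k (i+1) = x k i - α k • (Matrix.toEuclideanCLM (𝕜 := ℝ) (H k i)⁻¹) (g i (x k i)))
    (c C : ℝ) (hc : 0 < c) (hcC : c ≤ C)
    (hlb : ∀ i ∈ Finset.Icc 1 m, ∀ y, (hess i y - c • 1).PosSemidef)
    (hub : ∀ i ∈ Finset.Icc 1 m, ∀ y, (C • (1 : Matrix (Fin n) (Fin n) ℝ) - hess i y).PosSemidef)
 :
    ∀ k, 2 ≤ k → ∀ j ∈ Finset.Icc 1 m,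
      ‖g j (x k j) - g j (x k 1)‖ ≤
        ((2*(C/c)/m) * (α k / k)) *
          ∑ i ∈ Finset.Icc 1 (j-1),
            (1 + (2*(C/c)/m) * (α k / k))^(j-1-i) * ‖g i (x k 1)‖ := by
  intro k hk j hj
  have hm : 0 < m := by have := mem_Icc.mp hj; omega
  have hk1 : 1 ≤ k := by omega
  have hαk := hα k hk1
  have hC : 0 < C := hc.trans_le hcC
  have hc1 : (0 : Matrix (Fin n) (Fin n) ℝ) ≤ c • 1 := (Matrix.PosSemidef.one.smul hc.le).nonneg
  set ν : ℝ := (((k - 1) * m : ℕ) : ℝ) * c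
  have hν : 0 < ν := mul_pos (by exact_mod_cast Nat.mul_pos (by omega) hm) hc
  have hH : ∀ i ∈ Icc 1 m, ν • 1 ≤ H k i := fun i hi =>
    calc ν • 1 = ((k - 1) * m) • (c • (1 : Matrix (Fin n) (Fin n) ℝ)) := by
          rw [mul_smul, Nat.cast_smul_eq_nsmul]
      _ ≤ ((k - 1) * m + i) • (c • 1) := nsmul_le_nsmul_left hc1 (Nat.le_add_right _ _)
      _ ≤ H k i := nsmul_le_of_cyclic_accumulation (B := fun k i => hess i (x k i)) hH0 hHnext
          hHrec (fun k _ i hi => hlb i hi (x k i)) k hk1 i (mem_Icc.mp hi).2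
  refine norm_sub_le_of_incremental_steps (L := C) (ρ := α k * ν⁻¹) hC.le (by positivity) ?_ ?_ ?_
    j hj
  · have hkR : (2 : ℝ) ≤ k := by exact_mod_cast hk
    have hν' : ν = ((k : ℝ) - 1) * m * c := by
      simp only [ν, Nat.cast_mul, Nat.cast_sub hk1, Nat.cast_one]
    have hk1R : (0 : ℝ) < k - 1 := by linarith
    calc C * (α k * ν⁻¹) = C / c / m * α k / (k - 1) := by rw [hν']; field_simp
      _ ≤ C / c / m * α k / (k / 2) := by gcongr; linarith
      _ = 2 * (C / c) / m * (α k / k) := by ring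
  · intro i hi a b
    refine convex_univ.norm_image_sub_le_of_norm_hasFDerivWithin_le
      (fun y _ => (hhess i hi y).hasFDerivWithinAt) (fun y _ => ?_)
      (Set.mem_univ b) (Set.mem_univ a)
    exact Matrix.norm_toEuclideanCLM_le hC.le (hc1.trans (hlb i hi y)) (hub i hi y)
  · intro i hi
    rw [hiter k hk1 i hi, sub_sub_cancel, norm_smul, Real.norm_of_nonneg hαk.le, mul_assoc]
    exact mul_le_mul_of_nonneg_left (ContinuousLinearMap.le_of_opNorm_le _
      (Matrix.norm_toEuclideanCLM_inv_le hν (hH i hi)) _) hαk.le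

theorem statement8
    (n m : ℕ) (hm : 1 < m)
    (f : ℕ → EuclideanSpace ℝ (Fin n) → ℝ)
    (g : ℕ → EuclideanSpace ℝ (Fin n) → EuclideanSpace ℝ (Fin n))
    (hess : ℕ → EuclideanSpace ℝ (Fin n) → Matrix (Fin n) (Fin n) ℝ)
    (hgrad : ∀ i ∈ Finset.Icc 1 m, ∀ y, HasGradientAt (f i) (g i y) y)
    (hhess : ∀ i ∈ Finset.Icc 1 m, ∀ y, HasFDerivAt (g i) (Matrix.toEuclideanCLM (𝕜 := ℝ) (hess i y)) y)
    (hcont : ∀ i ∈ Finset.Icc 1 m, Continuous (hess i))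
    (α : ℕ → ℝ) (hα : ∀ k, 1 ≤ k → 0 < α k)
    (x : ℕ → ℕ → EuclideanSpace ℝ (Fin n))
    (H : ℕ → ℕ → Matrix (Fin n) (Fin n) ℝ)
    (hH0 : H 1 0 = 0)
    (hHnext : ∀ k, 1 ≤ k → H (k+1) 0 = H k m)
    (hHrec : ∀ k, 1 ≤ k → ∀ i ∈ Finset.Icc 1 m, H k i = H k (i-1) + hess i (x k i))
    (hxnext : ∀ k, 1 ≤ k → x (k+1) 1 = x k (m+1))
    (hiter : ∀ k, 1 ≤ k → ∀ i ∈ Finset.Icc 1 m,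
      x k (i+1) = x k i - α k • (Matrix.toEuclideanCLM (𝕜 := ℝ) (H k i)⁻¹) (g i (x k i)))
    (X : Set (EuclideanSpace ℝ (Fin n))) (hX : IsCompact X)
    (hbound : ∀ k, 1 ≤ k → ∀ i ∈ Finset.Icc 1 m, x k i ∈ X)
    (c C : ℝ) (hc : 0 < c) (hcC : c ≤ C)
    (hlb : ∀ i ∈ Finset.Icc 1 m, ∀ y, (hess i y - c • 1).PosSemidef)
    (hub : ∀ i ∈ Finset.Icc 1 m, ∀ y, (C • (1 : Matrix (Fin n) (Fin n) ℝ) - hess i y).PosSemidef)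
 :
    ∀ k, 2 ≤ k → ∀ j ∈ Finset.Icc 1 m,
      ‖g j (x k j) - g j (x k 1)‖ ≤
        ((2*(C/c)/m) * (α k / k)) *
          ∑ i ∈ Finset.Icc 1 (j-1),
            (1 + (2*(C/c)/m) * (α k / k))^(j-1-i) * ‖g i (x k 1)‖ :=
  statement8_general n m g hess hhess α hα x H hH0 hHnext hHrec hiter c C hc hcC hlb hub
end

section
/- Suppose Assumptions 1 and 2 hold. Then for all k ≥ 2, the gradient error e^k of the IN method satisfies ‖e^k‖ ≤ ( r^k + 2Q/(km) ) · Σ_{j=2}^m Σ_{i=1}^{j−1} (1 + r^k)^{j−1−i} ‖∇f_i(x_1^k)‖, where r^k = (2Q/m)·γ^k. -/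
/-!
Every Hessian adds at least `c • 1` to the accumulated matrix, so during cycle `k ≥ 2` each `H k i`
dominates `((k - 1) m c) • 1`, and the `i`-th incremental step has length at most
`β ‖∇fᵢ(xᵢ)‖` with `β = 2α / (k m c)`. As the gradients are `C`-Lipschitz,
`‖∇f_{p+1}(x_{p+1})‖ ≤ ‖∇f_{p+1}(x₁)‖ + Cβ Σ_{i ≤ p} ‖∇fᵢ(xᵢ)‖`, and a discrete Grönwall argument
bounds `Σ_{i ≤ p} ‖∇fᵢ(xᵢ)‖` by `Σ_{i ≤ p} (1 + Cβ)^{p-i} ‖∇fᵢ(x₁)‖`. The `j`-th summand of the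
error is at most `C (1 + 1/α) ‖xⱼ - x₁‖`, which gives the coefficient `r + 2Q/(km) = Cβ + Cβ/α`.
-/

open Finset Matrix
open scoped MatrixOrder RealInnerProductSpace

section Operator

variable {E : Type*} [NormedAddCommGroup E] [InnerProductSpace ℝ E]

lemma ContinuousLinearMap.norm_le_of_isSymmetric_of_abs_inner_le {T : E →L[ℝ] E}
    (hT : (T : E →ₗ[ℝ] E).IsSymmetric) {C : ℝ} (hC : 0 ≤ C)
    (h : ∀ x, |⟪T x, x⟫| ≤ C * ‖x‖ ^ 2) : ‖T‖ ≤ C := by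
  rw [T.norm_eq_iSup_rayleighQuotient hT]
  refine ciSup_le fun x => ?_
  rcases eq_or_ne x 0 with rfl | hx
  · simpa using hC
  · rw [abs_div, abs_sq, div_le_iff₀ (by positivity)]
    exact h x

lemma mul_norm_le_norm_apply_of_mul_norm_sq_le_inner {T : E →L[ℝ] E} {t : ℝ}
    (h : ∀ w, t * ‖w‖ ^ 2 ≤ ⟪w, T w⟫) (w : E) : t * ‖w‖ ≤ ‖T w‖ := by
  rcases (norm_nonneg w).eq_or_lt with hw | hw
  · rw [← hw, mul_zero]; exact norm_nonneg _
  · have : t * ‖w‖ * ‖w‖ ≤ ‖T w‖ * ‖w‖ := by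
      nlinarith [h w, real_inner_le_norm w (T w), norm_nonneg (T w)]
    exact le_of_mul_le_mul_right this hw

end Operator

section Matrix

variable {ι : Type*} [Fintype ι] [DecidableEq ι]

lemma Matrix.PosSemidef.inner_toEuclideanCLM_self_nonneg {A : Matrix ι ι ℝ} (hA : A.PosSemidef)
    (v : EuclideanSpace ℝ ι) : 0 ≤ ⟪v, toEuclideanCLM (𝕜 := ℝ) A v⟫ := by
  rw [inner_toEuclideanCLM]
  simpa using hA.dotProduct_mulVec_nonneg v.ofLp

lemma mul_norm_sq_le_inner_toEuclideanCLM {A : Matrix ι ι ℝ} {t : ℝ} (h : t • 1 ≤ A)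
    (v : EuclideanSpace ℝ ι) : t * ‖v‖ ^ 2 ≤ ⟪v, toEuclideanCLM (𝕜 := ℝ) A v⟫ := by
  have := PosSemidef.inner_toEuclideanCLM_self_nonneg h v
  rw [map_sub, map_smul, map_one, _root_.sub_apply, inner_sub_right,
    _root_.smul_apply, one_apply_eq_self, real_inner_smul_right,
    real_inner_self_eq_norm_sq] at this
  linarith

lemma inner_toEuclideanCLM_le_mul_norm_sq {A : Matrix ι ι ℝ} {t : ℝ} (h : A ≤ t • 1)
    (v : EuclideanSpace ℝ ι) : ⟪v, toEuclideanCLM (𝕜 := ℝ) A v⟫ ≤ t * ‖v‖ ^ 2 := by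
  have := PosSemidef.inner_toEuclideanCLM_self_nonneg h v
  rw [map_sub, map_smul, map_one, _root_.sub_apply, inner_sub_right,
    _root_.smul_apply, one_apply_eq_self, real_inner_smul_right,
    real_inner_self_eq_norm_sq] at this
  linarith

lemma norm_toEuclideanCLM_le_of_le_smul_one {A : Matrix ι ι ℝ} {C : ℝ} (hC : 0 ≤ C)
    (hA₀ : 0 ≤ A) (hA : A ≤ C • 1) : ‖toEuclideanCLM (𝕜 := ℝ) A‖ ≤ C := by
  refine ContinuousLinearMap.norm_le_of_isSymmetric_of_abs_inner_le ?_ hC fun x => ?_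
  · rw [coe_toEuclideanCLM_eq_toEuclideanLin]
    exact isSymmetric_toEuclideanLin_iff.mpr hA₀.posSemidef.isHermitian
  · rw [real_inner_comm, abs_of_nonneg (hA₀.posSemidef.inner_toEuclideanCLM_self_nonneg x)]
    exact inner_toEuclideanCLM_le_mul_norm_sq hA x

lemma norm_toEuclideanCLM_inv_apply_le {A : Matrix ι ι ℝ} {t : ℝ} (ht : 0 < t) (h : t • 1 ≤ A)
    (v : EuclideanSpace ℝ ι) : ‖toEuclideanCLM (𝕜 := ℝ) A⁻¹ v‖ ≤ t⁻¹ * ‖v‖ := by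
  have hA : A.PosDef := by
    simpa using (PosDef.one.smul ht).add_posSemidef (le_iff.mp h)
  have hinv : toEuclideanCLM (𝕜 := ℝ) A (toEuclideanCLM (𝕜 := ℝ) A⁻¹ v) = v := by
    rw [← mul_apply_eq_comp, ← map_mul, mul_nonsing_inv A ((isUnit_iff_isUnit_det A).mp hA.isUnit),
      map_one, one_apply_eq_self]
  rw [le_inv_mul_iff₀ ht]
  simpa only [hinv] using mul_norm_le_norm_apply_of_mul_norm_sq_le_inner
    (mul_norm_sq_le_inner_toEuclideanCLM h) (toEuclideanCLM (𝕜 := ℝ) A⁻¹ v)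

lemma norm_smul_toEuclideanCLM_inv_apply_le {A : Matrix ι ι ℝ} {a t : ℝ} (ha : 0 ≤ a) (ht : 0 < t)
    (h : t • 1 ≤ A) (v : EuclideanSpace ℝ ι) :
    ‖a • toEuclideanCLM (𝕜 := ℝ) A⁻¹ v‖ ≤ a / t * ‖v‖ := by
  rw [norm_smul, Real.norm_of_nonneg ha, div_eq_mul_inv, mul_assoc]
  exact mul_le_mul_of_nonneg_left (norm_toEuclideanCLM_inv_apply_le ht h v) ha

end Matrix

section OrderedMonoid

variable {M : Type*} [AddCommMonoid M] [PartialOrder M] [IsOrderedAddMonoid M]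

lemma add_nsmul_le_of_add_le_succ {H : ℕ → M} {a u : M} {m : ℕ} (h₀ : a ≤ H 0)
    (hsucc : ∀ i ∈ Icc 1 m, H (i - 1) + u ≤ H i) : ∀ i ≤ m, a + i • u ≤ H i := by
  intro i
  induction i with
  | zero => simpa using h₀
  | succ i ih =>
    intro hi
    calc a + (i + 1) • u = (a + i • u) + u := by rw [succ_nsmul, add_assoc]
      _ ≤ H i + u := add_le_add_left (ih (by omega)) u
      _ ≤ H (i + 1) := hsucc (i + 1) (mem_Icc.mpr ⟨by omega, hi⟩)

lemma nsmul_le_of_cyclic_add_le {H : ℕ → ℕ → M} {u : M} {m : ℕ} (h₁ : 0 ≤ H 1 0)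
    (hnext : ∀ K, 1 ≤ K → H (K + 1) 0 = H K m)
    (hsucc : ∀ K, 1 ≤ K → ∀ i ∈ Icc 1 m, H K (i - 1) + u ≤ H K i) :
    ∀ K, 1 ≤ K → ∀ i ≤ m, ((K - 1) * m + i) • u ≤ H K i := by
  have hstart : ∀ K, 1 ≤ K → ((K - 1) * m) • u ≤ H K 0 := by
    intro K hK
    induction K, hK using Nat.le_induction with
    | base => simpa using h₁
    | succ K hK ih =>
      rw [hnext K hK, show (K + 1 - 1) * m = (K - 1) * m + m by
        rw [Nat.add_sub_cancel, ← add_one_mul, Nat.sub_add_cancel hK], add_nsmul]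
      exact add_nsmul_le_of_add_le_succ ih (hsucc K hK) m le_rfl
  intro K hK i hi
  rw [add_nsmul]
  exact add_nsmul_le_of_add_le_succ (hstart K hK) (hsucc K hK) i hi

end OrderedMonoid

lemma sum_Icc_le_sum_pow_mul_of_le_add_mul_sum {a b : ℕ → ℝ} {r : ℝ} {m : ℕ} (hr : 0 ≤ r)
    (h : ∀ p, p + 1 ≤ m → a (p + 1) ≤ b (p + 1) + r * ∑ i ∈ Icc 1 p, a i) :
    ∀ p ≤ m, ∑ i ∈ Icc 1 p, a i ≤ ∑ i ∈ Icc 1 p, (1 + r) ^ (p - i) * b i := by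
  intro p
  induction p with
  | zero => simp
  | succ p ih =>
    intro hp
    have hshift : ∑ i ∈ Icc 1 (p + 1), (1 + r) ^ (p + 1 - i) * b i
        = (1 + r) * ∑ i ∈ Icc 1 p, (1 + r) ^ (p - i) * b i + b (p + 1) := by
      rw [sum_Icc_succ_top (by omega), Nat.sub_self, pow_zero, one_mul, mul_sum]
      congr 1
      refine sum_congr rfl fun i hi => ?_
      rw [Nat.sub_add_comm (mem_Icc.mp hi).2, pow_succ]
      ring
    rw [sum_Icc_succ_top (by omega), hshift]
    nlinarith [ih (by omega), h p hp]

section Cycle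

variable {E : Type*} [NormedAddCommGroup E] {m : ℕ} {y : ℕ → E} {g : ℕ → E → E} {β C : ℝ}

lemma norm_sub_first_le_mul_sum (hstep : ∀ i ∈ Icc 1 m, ‖y (i + 1) - y i‖ ≤ β * ‖g i (y i)‖)
    {p : ℕ} (hp : p ≤ m) : ‖y (p + 1) - y 1‖ ≤ β * ∑ i ∈ Icc 1 p, ‖g i (y i)‖ := by
  rw [← dist_eq_norm, dist_comm, mul_sum, ← Ico_add_one_right_eq_Icc]
  refine (dist_le_Ico_sum_dist y (by omega)).trans (sum_le_sum fun i hi => ?_)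
  rw [dist_comm, dist_eq_norm]
  exact hstep i (by simp only [mem_Ico, mem_Icc] at hi ⊢; omega)

lemma sum_norm_apply_le_sum_pow_mul (hC : 0 ≤ C) (hβ : 0 ≤ β)
    (hlip : ∀ i ∈ Icc 1 m, ∀ p q, ‖g i p - g i q‖ ≤ C * ‖p - q‖)
    (hstep : ∀ i ∈ Icc 1 m, ‖y (i + 1) - y i‖ ≤ β * ‖g i (y i)‖) :
    ∀ p ≤ m, ∑ i ∈ Icc 1 p, ‖g i (y i)‖ ≤ ∑ i ∈ Icc 1 p, (1 + C * β) ^ (p - i) * ‖g i (y 1)‖ := by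
  refine sum_Icc_le_sum_pow_mul_of_le_add_mul_sum (mul_nonneg hC hβ) fun p hp => ?_
  calc ‖g (p + 1) (y (p + 1))‖
      ≤ ‖g (p + 1) (y 1)‖ + ‖g (p + 1) (y (p + 1)) - g (p + 1) (y 1)‖ := norm_le_insert' _ _
    _ ≤ ‖g (p + 1) (y 1)‖ + C * (β * ∑ i ∈ Icc 1 p, ‖g i (y i)‖) := by
      gcongr
      exact (hlip (p + 1) (mem_Icc.mpr ⟨by omega, hp⟩) _ _).trans
        (mul_le_mul_of_nonneg_left (norm_sub_first_le_mul_sum hstep (by omega)) hC)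
    _ = _ := by ring

end Cycle

section Error

variable {E : Type*} [NormedAddCommGroup E] [NormedSpace ℝ E] {C : ℝ}

lemma norm_sub_add_smul_apply_sub_le {g : E → E} {T : E →L[ℝ] E} {s : ℝ} (hs : 0 ≤ s)
    (hlip : ∀ p q, ‖g p - g q‖ ≤ C * ‖p - q‖) (hT : ‖T‖ ≤ C) (p q : E) :
    ‖g p - g q + s • T (q - p)‖ ≤ C * (1 + s) * ‖p - q‖ := by
  have hTqp : ‖T (q - p)‖ ≤ C * ‖p - q‖ := by
    rw [norm_sub_rev p q]
    exact (T.le_opNorm _).trans (mul_le_mul_of_nonneg_right hT (norm_nonneg _))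
  calc ‖g p - g q + s • T (q - p)‖ ≤ ‖g p - g q‖ + s * ‖T (q - p)‖ :=
        (norm_add_le _ _).trans_eq (by rw [norm_smul, Real.norm_of_nonneg hs])
    _ ≤ C * ‖p - q‖ + s * (C * ‖p - q‖) := by gcongr; exact hlip p q
    _ = C * (1 + s) * ‖p - q‖ := by ring

variable {m : ℕ} {y : ℕ → E} {g : ℕ → E → E} {T : ℕ → E →L[ℝ] E} {β s : ℝ}

lemma norm_sum_sub_add_smul_apply_sub_le (hC : 0 ≤ C) (hβ : 0 ≤ β) (hs : 0 ≤ s) (hm : 1 ≤ m)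
    (hlip : ∀ i ∈ Icc 1 m, ∀ p q, ‖g i p - g i q‖ ≤ C * ‖p - q‖)
    (hT : ∀ j ∈ Icc 1 m, ‖T j‖ ≤ C)
    (hstep : ∀ i ∈ Icc 1 m, ‖y (i + 1) - y i‖ ≤ β * ‖g i (y i)‖) :
    ‖∑ j ∈ Icc 1 m, (g j (y j) - g j (y 1) + s • T j (y 1 - y j))‖ ≤
      (C * β + C * β * s) *
        ∑ j ∈ Icc 2 m, ∑ i ∈ Icc 1 (j - 1), (1 + C * β) ^ (j - 1 - i) * ‖g i (y 1)‖ := by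
  have hterm : ∀ p, p + 1 ≤ m →
      ‖g (p + 1) (y (p + 1)) - g (p + 1) (y 1) + s • T (p + 1) (y 1 - y (p + 1))‖ ≤
        (C * β + C * β * s) * ∑ i ∈ Icc 1 p, (1 + C * β) ^ (p - i) * ‖g i (y 1)‖ := by
    intro p hp
    have hmem : p + 1 ∈ Icc 1 m := mem_Icc.mpr ⟨by omega, hp⟩
    calc _ ≤ C * (1 + s) * ‖y (p + 1) - y 1‖ :=
          norm_sub_add_smul_apply_sub_le hs (hlip _ hmem) (hT _ hmem) _ _
      _ ≤ C * (1 + s) * (β * ∑ i ∈ Icc 1 p, ‖g i (y i)‖) := by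
          gcongr; exact norm_sub_first_le_mul_sum hstep (by omega)
      _ ≤ C * (1 + s) * (β * ∑ i ∈ Icc 1 p, (1 + C * β) ^ (p - i) * ‖g i (y 1)‖) := by
          gcongr C * (1 + s) * (β * ?_)
          exact sum_norm_apply_le_sum_pow_mul hC hβ hlip hstep p (by omega)
      _ = _ := by ring
  rw [mul_sum]
  refine (norm_sum_le _ _).trans ?_
  rw [Icc_eq_cons_Ioc hm, sum_cons, ← Icc_add_one_left_eq_Ioc, sub_self, sub_self, map_zero,
    smul_zero, add_zero, norm_zero, zero_add]
  refine sum_le_sum fun j hj => ?_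
  obtain ⟨p, rfl⟩ : ∃ p, j = p + 1 := ⟨j - 1, by simp only [mem_Icc] at hj; omega⟩
  exact hterm p (mem_Icc.mp hj).2

end Error

section HessianAccumulation

variable {ι : Type*} [DecidableEq ι]

lemma smul_one_le_of_cyclic_add {m : ℕ} {H : ℕ → ℕ → Matrix ι ι ℝ} {P : ℕ → ℕ → Matrix ι ι ℝ}
    {c : ℝ} (hc : 0 ≤ c) (h₁ : H 1 0 = 0) (hnext : ∀ K, 1 ≤ K → H (K + 1) 0 = H K m)
    (hrec : ∀ K, 1 ≤ K → ∀ i ∈ Icc 1 m, H K i = H K (i - 1) + P K i)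
    (hP : ∀ K, 1 ≤ K → ∀ i ∈ Icc 1 m, c • 1 ≤ P K i) :
    ∀ K : ℕ, 1 ≤ K → ∀ i ∈ Icc 1 m, (((K : ℝ) - 1) * m * c) • 1 ≤ H K i := by
  intro K hK i hi
  have hacc := nsmul_le_of_cyclic_add_le (u := c • (1 : Matrix ι ι ℝ)) h₁.ge hnext
    (fun K hK i hi => (hrec K hK i hi).symm ▸ add_le_add_right (hP K hK i hi) _) K hK i
    (mem_Icc.mp hi).2
  refine le_trans ?_ hacc
  rw [← Nat.cast_smul_eq_nsmul ℝ, smul_smul, le_iff, ← sub_smul]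
  refine PosSemidef.one.smul ?_
  push_cast [Nat.cast_sub hK]
  nlinarith [(Nat.cast_nonneg i : (0 : ℝ) ≤ i)]

end HessianAccumulation

theorem statement9_general
    (n m : ℕ) (hm : 1 < m)
    (g : ℕ → EuclideanSpace ℝ (Fin n) → EuclideanSpace ℝ (Fin n))
    (hess : ℕ → EuclideanSpace ℝ (Fin n) → Matrix (Fin n) (Fin n) ℝ)
    (hhess : ∀ i ∈ Finset.Icc 1 m, ∀ y, HasFDerivAt (g i) (Matrix.toEuclideanCLM (𝕜 := ℝ) (hess i y)) y)
    (α : ℕ → ℝ) (hα : ∀ k, 1 ≤ k → 0 < α k)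
    (x : ℕ → ℕ → EuclideanSpace ℝ (Fin n))
    (H : ℕ → ℕ → Matrix (Fin n) (Fin n) ℝ)
    (hH0 : H 1 0 = 0)
    (hHnext : ∀ k, 1 ≤ k → H (k+1) 0 = H k m)
    (hHrec : ∀ k, 1 ≤ k → ∀ i ∈ Finset.Icc 1 m, H k i = H k (i-1) + hess i (x k i))
    (hiter : ∀ k, 1 ≤ k → ∀ i ∈ Finset.Icc 1 m,
      x k (i+1) = x k i - α k • (Matrix.toEuclideanCLM (𝕜 := ℝ) (H k i)⁻¹) (g i (x k i)))
    (c C : ℝ) (hc : 0 < c) (hcC : c ≤ C)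
    (hlb : ∀ i ∈ Finset.Icc 1 m, ∀ y, (hess i y - c • 1).PosSemidef)
    (hub : ∀ i ∈ Finset.Icc 1 m, ∀ y, (C • (1 : Matrix (Fin n) (Fin n) ℝ) - hess i y).PosSemidef)
 :
    ∀ k, 2 ≤ k →
      ‖∑ j ∈ Finset.Icc 1 m, (g j (x k j) - g j (x k 1)
          + (α k)⁻¹ • (Matrix.toEuclideanCLM (𝕜 := ℝ) (hess j (x k j))) (x k 1 - x k j))‖ ≤
        ((2*(C/c)/m) * (α k / k) + 2*(C/c)/((k:ℝ)*m)) *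
          ∑ j ∈ Finset.Icc 2 m, ∑ i ∈ Finset.Icc 1 (j-1),
            (1 + (2*(C/c)/m) * (α k / k))^(j-1-i) * ‖g i (x k 1)‖ := by
  intro k hk
  have hC : 0 < C := hc.trans_le hcC
  have hk₁ : 1 ≤ k := by omega
  have ha : 0 < α k := hα k hk₁
  have hkR : (2 : ℝ) ≤ k := by exact_mod_cast hk
  have hhess_le : ∀ i ∈ Icc 1 m, ∀ y, ‖toEuclideanCLM (𝕜 := ℝ) (hess i y)‖ ≤ C := fun i hi y =>
    norm_toEuclideanCLM_le_of_le_smul_one hC.le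
      ((PosSemidef.one.smul hc.le).nonneg.trans (hlb i hi y : c • 1 ≤ hess i y)) (hub i hi y)
  have hlip : ∀ i ∈ Icc 1 m, ∀ p q, ‖g i p - g i q‖ ≤ C * ‖p - q‖ := fun i hi p q =>
    Convex.norm_image_sub_le_of_norm_hasFDerivWithin_le
      (fun y _ => (hhess i hi y).hasFDerivWithinAt) (fun y _ => hhess_le i hi y)
      convex_univ trivial trivial
  have hH := smul_one_le_of_cyclic_add hc.le hH0 hHnext hHrec (fun _ _ i hi => hlb i hi _) k hk₁
  have hstep : ∀ i ∈ Icc 1 m, ‖x k (i + 1) - x k i‖ ≤ 2 * α k / (k * m * c) * ‖g i (x k i)‖ := by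
    intro i hi
    have hm₀ : (0 : ℝ) < m := by exact_mod_cast (by omega : 0 < m)
    have hlam : 0 < ((k : ℝ) - 1) * m * c := by
      have : (0 : ℝ) < k - 1 := by linarith
      positivity
    rw [hiter k hk₁ i hi, sub_sub_cancel_left, norm_neg]
    refine (norm_smul_toEuclideanCLM_inv_apply_le ha.le hlam (hH i hi) _).trans
      (mul_le_mul_of_nonneg_right ?_ (norm_nonneg _))
    rw [div_le_div_iff₀ hlam (by positivity)]
    nlinarith [mul_nonneg (mul_pos ha (mul_pos hm₀ hc)).le (by linarith : (0 : ℝ) ≤ k - 2)]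
  have key := norm_sum_sub_add_smul_apply_sub_le
    (T := fun j => toEuclideanCLM (𝕜 := ℝ) (hess j (x k j))) hC.le (by positivity)
    (inv_pos.mpr ha).le hm.le hlip (fun j hj => hhess_le j hj _) hstep
  have hr : C * (2 * α k / (k * m * c)) = 2 * (C / c) / m * (α k / k) := by
    field_simp
  have hA : C * (2 * α k / (k * m * c)) * (α k)⁻¹ = 2 * (C / c) / ((k : ℝ) * m) := by
    field_simp
  rwa [hA, hr] at key

theorem statement9
    (n m : ℕ) (hm : 1 < m)
    (f : ℕ → EuclideanSpace ℝ (Fin n) → ℝ)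
    (g : ℕ → EuclideanSpace ℝ (Fin n) → EuclideanSpace ℝ (Fin n))
    (hess : ℕ → EuclideanSpace ℝ (Fin n) → Matrix (Fin n) (Fin n) ℝ)
    (hgrad : ∀ i ∈ Finset.Icc 1 m, ∀ y, HasGradientAt (f i) (g i y) y)
    (hhess : ∀ i ∈ Finset.Icc 1 m, ∀ y, HasFDerivAt (g i) (Matrix.toEuclideanCLM (𝕜 := ℝ) (hess i y)) y)
    (hcont : ∀ i ∈ Finset.Icc 1 m, Continuous (hess i))
    (α : ℕ → ℝ) (hα : ∀ k, 1 ≤ k → 0 < α k)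
    (x : ℕ → ℕ → EuclideanSpace ℝ (Fin n))
    (H : ℕ → ℕ → Matrix (Fin n) (Fin n) ℝ)
    (hH0 : H 1 0 = 0)
    (hHnext : ∀ k, 1 ≤ k → H (k+1) 0 = H k m)
    (hHrec : ∀ k, 1 ≤ k → ∀ i ∈ Finset.Icc 1 m, H k i = H k (i-1) + hess i (x k i))
    (hxnext : ∀ k, 1 ≤ k → x (k+1) 1 = x k (m+1))
    (hiter : ∀ k, 1 ≤ k → ∀ i ∈ Finset.Icc 1 m,
      x k (i+1) = x k i - α k • (Matrix.toEuclideanCLM (𝕜 := ℝ) (H k i)⁻¹) (g i (x k i)))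
    (X : Set (EuclideanSpace ℝ (Fin n))) (hX : IsCompact X)
    (hbound : ∀ k, 1 ≤ k → ∀ i ∈ Finset.Icc 1 m, x k i ∈ X)
    (c C : ℝ) (hc : 0 < c) (hcC : c ≤ C)
    (hlb : ∀ i ∈ Finset.Icc 1 m, ∀ y, (hess i y - c • 1).PosSemidef)
    (hub : ∀ i ∈ Finset.Icc 1 m, ∀ y, (C • (1 : Matrix (Fin n) (Fin n) ℝ) - hess i y).PosSemidef)
 :
    ∀ k, 2 ≤ k →
      ‖∑ j ∈ Finset.Icc 1 m, (g j (x k j) - g j (x k 1)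
          + (α k)⁻¹ • (Matrix.toEuclideanCLM (𝕜 := ℝ) (hess j (x k j))) (x k 1 - x k j))‖ ≤
        ((2*(C/c)/m) * (α k / k) + 2*(C/c)/((k:ℝ)*m)) *
          ∑ j ∈ Finset.Icc 2 m, ∑ i ∈ Finset.Icc 1 (j-1),
            (1 + (2*(C/c)/m) * (α k / k))^(j-1-i) * ‖g i (x k 1)‖ :=
  statement9_general n m hm g hess hhess α hα x H hH0 hHnext hHrec hiter c C hc hcC hlb hub
end

section
/- Suppose α^1 = 1 and each component function is a strongly convex quadratic, f_j(x) = (1/2)xᵀA_j x + b_jᵀx + d_j with A_j symmetric positive definite. Then one cycle of the IN method reaches the global optimum: the iterate x_{m+1}^1 obtained at the end of the first cycle equals the unique minimizer of f(x) = Σ_{j=1}^m f_j(x) over ℝ^n. -/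
open Finset Filter Classical

noncomputable def quadObj (n m : ℕ) (A : ℕ → Matrix (Fin n) (Fin n) ℝ)
    (b : ℕ → EuclideanSpace ℝ (Fin n)) (d : ℕ → ℝ) (y : EuclideanSpace ℝ (Fin n)) : ℝ :=
  ∑ j ∈ Finset.Icc 1 m,
    ((1/2) * (inner ℝ y ((Matrix.toEuclideanCLM (𝕜 := ℝ) (A j)) y) : ℝ) + (inner ℝ (b j) y : ℝ) + d j)

/-! On quadratics, the `i`-th IN step from `xᵢ` is a full Newton step for `f₁ + ⋯ + fᵢ`, whose
Hessian is `Hᵢ = A₁ + ⋯ + Aᵢ`. Hence the invariant `Hᵢ xᵢ₊₁ = -(b₁ + ⋯ + bᵢ)` propagates: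
`Hᵢ xᵢ₊₁ = Hᵢ xᵢ - (Aᵢ xᵢ + bᵢ) = Hᵢ₋₁ xᵢ - bᵢ`. For `i = m` it is the normal equation of the
strongly convex quadratic `f`, so `xₘ₊₁` is its unique minimizer. -/

open scoped RealInnerProductSpace

section Quadratic

variable {E : Type*} [NormedAddCommGroup E] [InnerProductSpace ℝ E] {T : E →ₗ[ℝ] E} {c x : E}

lemma LinearMap.IsSymmetric.quadratic_eq_add_of_apply_eq_neg (hT : T.IsSymmetric)
    (hx : T x = -c) (y : E) :
    (1/2) * ⟪y, T y⟫ + ⟪c, y⟫ = (1/2) * ⟪x, T x⟫ + ⟪c, x⟫ + (1/2) * ⟪y - x, T (y - x)⟫ := by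
  have hyx : ⟪y, T x⟫ = -⟪c, y⟫ := by rw [hx, inner_neg_right, real_inner_comm]
  have hxy : ⟪x, T y⟫ = -⟪c, y⟫ := by rw [← hT, hx, inner_neg_left]
  have hxx : ⟪x, T x⟫ = -⟪c, x⟫ := by rw [hx, inner_neg_right, real_inner_comm]
  simp only [map_sub, inner_sub_left, inner_sub_right]
  linarith

lemma LinearMap.IsSymmetric.unique_minimizer_of_apply_eq_neg (hT : T.IsSymmetric)
    (hpos : ∀ v ≠ 0, 0 < ⟪v, T v⟫) (hx : T x = -c) {k : ℝ} {f : E → ℝ}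
    (hf : ∀ y, f y = (1/2) * ⟪y, T y⟫ + ⟪c, y⟫ + k) :
    (∀ y, f x ≤ f y) ∧ ∀ z, (∀ y, f z ≤ f y) → z = x := by
  have hfx (y : E) : f y = f x + (1/2) * ⟪y - x, T (y - x)⟫ := by
    rw [hf, hf, hT.quadratic_eq_add_of_apply_eq_neg hx y]
    ring
  have hnonneg (v : E) : 0 ≤ ⟪v, T v⟫ := by
    rcases eq_or_ne v 0 with rfl | hv
    · simp
    · exact (hpos v hv).le
  refine ⟨fun y => by rw [hfx y]; linarith [hnonneg (y - x)], fun z hz => ?_⟩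
  by_contra hzx
  have hxz := hz x
  rw [hfx z] at hxz
  linarith [hpos _ (sub_ne_zero.mpr hzx)]

end Quadratic

lemma Matrix.PosDef.inner_toEuclideanCLM_self_pos {ι : Type*} [Fintype ι] [DecidableEq ι]
    {M : Matrix ι ι ℝ} (hM : M.PosDef) {v : EuclideanSpace ℝ ι} (hv : v ≠ 0) :
    0 < ⟪v, Matrix.toEuclideanCLM (𝕜 := ℝ) M v⟫ := by
  rw [Matrix.inner_toEuclideanCLM]
  simpa using hM.dotProduct_mulVec_pos (x := WithLp.ofLp v) (by simpa using hv)

lemma eq_sum_Icc_of_eq_add {M : Type*} [AddCommMonoid M] {H A : ℕ → M} {m : ℕ} (hH0 : H 0 = 0)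
    (hH : ∀ i ∈ Icc 1 m, H i = H (i - 1) + A i) {i : ℕ} (him : i ≤ m) :
    H i = ∑ j ∈ Icc 1 i, A j := by
  induction i with
  | zero => simp [hH0]
  | succ i ih =>
    rw [hH (i + 1) (mem_Icc.mpr ⟨by omega, him⟩), Nat.add_sub_cancel, ih (by omega),
      sum_Icc_succ_top (by omega)]

section IncrementalNewton

variable {𝕜 ι : Type*} [RCLike 𝕜] [Fintype ι] [DecidableEq ι]

lemma Matrix.toEuclideanCLM_add_apply_sub_nonsing_inv {H A : Matrix ι ι 𝕜}
    (hdet : IsUnit (H + A).det) (x b : EuclideanSpace 𝕜 ι) :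
    Matrix.toEuclideanCLM (𝕜 := 𝕜) (H + A)
        (x - Matrix.toEuclideanCLM (𝕜 := 𝕜) (H + A)⁻¹ (Matrix.toEuclideanCLM (𝕜 := 𝕜) A x + b)) =
      Matrix.toEuclideanCLM (𝕜 := 𝕜) H x - b := by
  rw [map_sub, ← mul_apply_eq_comp, ← map_mul, Matrix.mul_nonsing_inv _ hdet, map_one,
    one_apply_eq_self, map_add, _root_.add_apply]
  abel

lemma toEuclideanCLM_apply_incrementalNewton {m : ℕ} {A H : ℕ → Matrix ι ι 𝕜}
    {b x : ℕ → EuclideanSpace 𝕜 ι} (hH0 : H 0 = 0) (hH : ∀ i ∈ Icc 1 m, H i = H (i - 1) + A i)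
    (hdet : ∀ i ∈ Icc 1 m, IsUnit (H i).det)
    (hiter : ∀ i ∈ Icc 1 m,
      x (i + 1) = x i - Matrix.toEuclideanCLM (𝕜 := 𝕜) (H i)⁻¹
        (Matrix.toEuclideanCLM (𝕜 := 𝕜) (A i) (x i) + b i))
    {i : ℕ} (him : i ≤ m) :
    Matrix.toEuclideanCLM (𝕜 := 𝕜) (H i) (x (i + 1)) = -∑ j ∈ Icc 1 i, b j := by
  induction i with
  | zero => simp [hH0]
  | succ i ih =>
    have hi : i + 1 ∈ Icc 1 m := mem_Icc.mpr ⟨by omega, him⟩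
    have hHi : H (i + 1) = H i + A (i + 1) := hH _ hi
    rw [hiter _ hi, hHi, Matrix.toEuclideanCLM_add_apply_sub_nonsing_inv (hHi ▸ hdet _ hi),
      ih (by omega), sum_Icc_succ_top (by omega)]
    abel

end IncrementalNewton

lemma quadObj_eq (n m : ℕ) (A : ℕ → Matrix (Fin n) (Fin n) ℝ) (b : ℕ → EuclideanSpace ℝ (Fin n))
    (d : ℕ → ℝ) (y : EuclideanSpace ℝ (Fin n)) :
    quadObj n m A b d y = (1/2) * ⟪y, Matrix.toEuclideanCLM (𝕜 := ℝ) (∑ j ∈ Icc 1 m, A j) y⟫ +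
      ⟪∑ j ∈ Icc 1 m, b j, y⟫ + ∑ j ∈ Icc 1 m, d j := by
  simp only [quadObj, sum_add_distrib, ← mul_sum, map_sum, _root_.sum_apply, inner_sum, sum_inner]

theorem statement12 (n m : ℕ) (hm : 1 < m)
    (A : ℕ → Matrix (Fin n) (Fin n) ℝ) (b : ℕ → EuclideanSpace ℝ (Fin n)) (d : ℕ → ℝ)
    (hA : ∀ j ∈ Finset.Icc 1 m, (A j).PosDef ∧ (A j).IsSymm)
    (x : ℕ → EuclideanSpace ℝ (Fin n))
    (H : ℕ → Matrix (Fin n) (Fin n) ℝ)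
    (hH0 : H 0 = 0)
    (hH : ∀ i ∈ Finset.Icc 1 m, H i = H (i-1) + A i)
    (hiter : ∀ i ∈ Finset.Icc 1 m,
      x (i+1) = x i - (Matrix.toEuclideanCLM (𝕜 := ℝ) (H i)⁻¹)
        ((Matrix.toEuclideanCLM (𝕜 := ℝ) (A i)) (x i) + b i)) :
    (∀ y, quadObj n m A b d (x (m+1)) ≤ quadObj n m A b d y) ∧
      (∀ z, (∀ y, quadObj n m A b d z ≤ quadObj n m A b d y) → z = x (m+1)) := by
  have hsum (i : ℕ) (him : i ≤ m) : H i = ∑ j ∈ Icc 1 i, A j := eq_sum_Icc_of_eq_add hH0 hH him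
  have hpos (i : ℕ) (hi : i ∈ Icc 1 m) : (H i).PosDef := by
    obtain ⟨h1i, him⟩ := mem_Icc.mp hi
    rw [hsum i him]
    exact Matrix.posDef_sum (nonempty_Icc.mpr h1i)
      fun j hj => (hA j (Icc_subset_Icc_right him hj)).1
  have hS : (∑ j ∈ Icc 1 m, A j).PosDef := hsum m le_rfl ▸ hpos m (mem_Icc.mpr ⟨hm.le, le_rfl⟩)
  have hnormal : Matrix.toEuclideanCLM (𝕜 := ℝ) (∑ j ∈ Icc 1 m, A j) (x (m + 1)) =
      -∑ j ∈ Icc 1 m, b j :=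
    hsum m le_rfl ▸ toEuclideanCLM_apply_incrementalNewton hH0 hH
      (fun i hi => (hpos i hi).det_pos.ne'.isUnit) hiter le_rfl
  have hsymm : (Matrix.toEuclideanCLM (𝕜 := ℝ) (∑ j ∈ Icc 1 m, A j) :
      EuclideanSpace ℝ (Fin n) →ₗ[ℝ] EuclideanSpace ℝ (Fin n)).IsSymmetric := by
    rw [Matrix.coe_toEuclideanCLM_eq_toEuclideanLin, Matrix.isSymmetric_toEuclideanLin_iff]
    exact hS.isHermitian
  exact hsymm.unique_minimizer_of_apply_eq_neg (fun v hv => hS.inner_toEuclideanCLM_self_pos hv)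
    hnormal (quadObj_eq n m A b d)
end

section
/- Under Assumption 2, for every k ≥ 1 the IN method satisfies ‖∇f(x_1^k) − h_m^k‖ ≤ C(1 + 1/α^k)·Σ_{j=2}^m ‖x_j^k − x_1^k‖, where h_m^k = Σ_{j=1}^m ( ∇f_j(x_j^k) + (1/α^k)∇²f_j(x_j^k)(x_1^k − x_j^k) ). -/
/-!
For `j ≥ 2` the `j`-th summand is `∇f_j(x_1) - ∇f_j(x_j) - α⁻¹ ∇²f_j(x_j) (x_1 - x_j)`, and the
`j = 1` summand vanishes. The Hessian bounds `c I ⪯ ∇²f_j ⪯ C I` make every Hessian an operator of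
norm at most `C` (a symmetric operator's norm is the supremum of its Rayleigh quotient), so by the
mean value inequality `∇f_j` is `C`-Lipschitz and each summand is at most
`C (1 + 1/α) ‖x_j - x_1‖`.
-/

open Finset

open RCLike in
theorem ContinuousLinearMap.norm_le_of_abs_re_inner_le {𝕜 E : Type*} [RCLike 𝕜] [NormedAddCommGroup E]
    [InnerProductSpace 𝕜 E] {T : E →L[𝕜] E} (hT : T.IsSymmetric) {C : ℝ} (hC : 0 ≤ C)
    (h : ∀ x, |re (inner 𝕜 (T x) x)| ≤ C * ‖x‖ ^ 2) : ‖T‖ ≤ C := by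
  rw [T.norm_eq_iSup_rayleighQuotient hT]
  refine ciSup_le fun x => ?_
  rcases eq_or_ne x 0 with rfl | hx
  · simpa using hC
  · rw [rayleighQuotient, reApplyInnerSelf_apply, abs_div, abs_sq, div_le_iff₀ (by positivity)]
    exact h x

namespace Matrix

variable {n : Type*} [Fintype n] [DecidableEq n]

theorem PosSemidef.inner_toEuclideanCLM_self_nonneg_s15 {B : Matrix n n ℝ} (hB : B.PosSemidef)
    (x : EuclideanSpace ℝ n) : 0 ≤ inner ℝ (toEuclideanCLM (𝕜 := ℝ) B x) x :=
  (isPositive_toEuclideanLin_iff.mpr hB).re_inner_nonneg_left x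

theorem norm_toEuclideanCLM_le_of_posSemidef {A : Matrix n n ℝ} {c C : ℝ}
    (hlb : (A - c • 1).PosSemidef) (hub : (C • 1 - A).PosSemidef) (hcC : -C ≤ c) (hC : 0 ≤ C) :
    ‖toEuclideanCLM (𝕜 := ℝ) A‖ ≤ C := by
  have hA : A.IsHermitian := by
    simpa using (isHermitian_one.smul (IsSelfAdjoint.all C)).sub hub.isHermitian
  refine ContinuousLinearMap.norm_le_of_abs_re_inner_le
    (isSymmetric_toEuclideanLin_iff.mpr hA) hC fun x => ?_
  have hlow := hlb.inner_toEuclideanCLM_self_nonneg_s15 x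
  have hupp := hub.inner_toEuclideanCLM_self_nonneg_s15 x
  simp only [map_sub, map_smul, map_one, _root_.sub_apply, _root_.smul_apply, one_apply_eq_self,
    inner_sub_left, real_inner_smul_left, real_inner_self_eq_norm_sq] at hlow hupp
  rw [RCLike.re_to_real, abs_le]
  constructor <;> nlinarith [sq_nonneg ‖x‖]

end Matrix

theorem norm_sub_add_inv_smul_le {E F : Type*} [NormedAddCommGroup E] [NormedSpace ℝ E]
    [NormedAddCommGroup F] [NormedSpace ℝ F] {g : E → F} {T : E →L[ℝ] F} {a b : E} {C α : ℝ}
    (hg : ‖g a - g b‖ ≤ C * ‖a - b‖) (hT : ‖T‖ ≤ C) (hα : 0 < α) :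
    ‖g a - (g b + α⁻¹ • T (a - b))‖ ≤ C * (1 + 1 / α) * ‖b - a‖ := by
  have hTab : ‖α⁻¹ • T (a - b)‖ ≤ α⁻¹ * (C * ‖a - b‖) := by
    rw [norm_smul, Real.norm_of_nonneg (inv_nonneg.mpr hα.le)]
    gcongr
    exact T.le_of_opNorm_le hT _
  calc ‖g a - (g b + α⁻¹ • T (a - b))‖
      ≤ ‖g a - g b‖ + ‖α⁻¹ • T (a - b)‖ := by rw [← sub_sub]; exact norm_sub_le _ _
    _ ≤ C * ‖a - b‖ + α⁻¹ * (C * ‖a - b‖) := add_le_add hg hTab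
    _ = C * (1 + 1 / α) * ‖b - a‖ := by rw [norm_sub_rev]; ring

theorem statement15_general
    (n m : ℕ)
    (g : ℕ → EuclideanSpace ℝ (Fin n) → EuclideanSpace ℝ (Fin n))
    (hess : ℕ → EuclideanSpace ℝ (Fin n) → Matrix (Fin n) (Fin n) ℝ)
    (hhess : ∀ i ∈ Finset.Icc 1 m, ∀ y, HasFDerivAt (g i) (Matrix.toEuclideanCLM (𝕜 := ℝ) (hess i y)) y)
    (α : ℕ → ℝ) (hα : ∀ k, 1 ≤ k → 0 < α k)
    (x : ℕ → ℕ → EuclideanSpace ℝ (Fin n))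
    (c C : ℝ) (hc : 0 < c) (hcC : c ≤ C)
    (hlb : ∀ i ∈ Finset.Icc 1 m, ∀ y, (hess i y - c • 1).PosSemidef)
    (hub : ∀ i ∈ Finset.Icc 1 m, ∀ y, (C • (1 : Matrix (Fin n) (Fin n) ℝ) - hess i y).PosSemidef)
 :
    ∀ k, 1 ≤ k →
      ‖(∑ i ∈ Finset.Icc 1 m, g i (x k 1)) -
          ∑ j ∈ Finset.Icc 1 m, (g j (x k j)
            + (α k)⁻¹ • (Matrix.toEuclideanCLM (𝕜 := ℝ) (hess j (x k j))) (x k 1 - x k j))‖ ≤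
        C * (1 + 1/α k) * ∑ j ∈ Finset.Icc 2 m, ‖x k j - x k 1‖ := by
  intro k hk
  have hC : 0 ≤ C := hc.le.trans hcC
  have hhess_norm : ∀ j ∈ Icc 1 m, ∀ y, ‖Matrix.toEuclideanCLM (𝕜 := ℝ) (hess j y)‖ ≤ C :=
    fun j hj y => Matrix.norm_toEuclideanCLM_le_of_posSemidef (hlb j hj y) (hub j hj y)
      (by linarith) hC
  have hlip : ∀ j ∈ Icc 1 m, ∀ a b, ‖g j a - g j b‖ ≤ C * ‖a - b‖ := fun j hj a b =>
    convex_univ.norm_image_sub_le_of_norm_hasFDerivWithin_le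
      (fun y _ => (hhess j hj y).hasFDerivWithinAt) (fun y _ => hhess_norm j hj y)
      (Set.mem_univ b) (Set.mem_univ a)
  have hterm_one : ∀ j ∈ Icc 1 m, j ∉ Icc 2 m → g j (x k 1) - (g j (x k j)
      + (α k)⁻¹ • Matrix.toEuclideanCLM (𝕜 := ℝ) (hess j (x k j)) (x k 1 - x k j)) = 0 := by
    intro j hj hj2
    obtain rfl : j = 1 := by simp only [mem_Icc] at hj hj2; omega
    simp
  rw [← sum_sub_distrib, ← sum_subset (Icc_subset_Icc_left one_le_two) hterm_one, mul_sum]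
  refine (norm_sum_le _ _).trans (sum_le_sum fun j hj => ?_)
  have hj1 : j ∈ Icc 1 m := Icc_subset_Icc_left one_le_two hj
  exact norm_sub_add_inv_smul_le (hlip j hj1 _ _) (hhess_norm j hj1 _) (hα k hk)

theorem statement15
    (n m : ℕ) (hm : 1 < m)
    (f : ℕ → EuclideanSpace ℝ (Fin n) → ℝ)
    (g : ℕ → EuclideanSpace ℝ (Fin n) → EuclideanSpace ℝ (Fin n))
    (hess : ℕ → EuclideanSpace ℝ (Fin n) → Matrix (Fin n) (Fin n) ℝ)
    (hgrad : ∀ i ∈ Finset.Icc 1 m, ∀ y, HasGradientAt (f i) (g i y) y)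
    (hhess : ∀ i ∈ Finset.Icc 1 m, ∀ y, HasFDerivAt (g i) (Matrix.toEuclideanCLM (𝕜 := ℝ) (hess i y)) y)
    (hcont : ∀ i ∈ Finset.Icc 1 m, Continuous (hess i))
    (α : ℕ → ℝ) (hα : ∀ k, 1 ≤ k → 0 < α k)
    (x : ℕ → ℕ → EuclideanSpace ℝ (Fin n))
    (H : ℕ → ℕ → Matrix (Fin n) (Fin n) ℝ)
    (hH0 : H 1 0 = 0)
    (hHnext : ∀ k, 1 ≤ k → H (k+1) 0 = H k m)
    (hHrec : ∀ k, 1 ≤ k → ∀ i ∈ Finset.Icc 1 m, H k i = H k (i-1) + hess i (x k i))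
    (hxnext : ∀ k, 1 ≤ k → x (k+1) 1 = x k (m+1))
    (hiter : ∀ k, 1 ≤ k → ∀ i ∈ Finset.Icc 1 m,
      x k (i+1) = x k i - α k • (Matrix.toEuclideanCLM (𝕜 := ℝ) (H k i)⁻¹) (g i (x k i)))
    (c C : ℝ) (hc : 0 < c) (hcC : c ≤ C)
    (hlb : ∀ i ∈ Finset.Icc 1 m, ∀ y, (hess i y - c • 1).PosSemidef)
    (hub : ∀ i ∈ Finset.Icc 1 m, ∀ y, (C • (1 : Matrix (Fin n) (Fin n) ℝ) - hess i y).PosSemidef)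
 :
    ∀ k, 1 ≤ k →
      ‖(∑ i ∈ Finset.Icc 1 m, g i (x k 1)) -
          ∑ j ∈ Finset.Icc 1 m, (g j (x k j)
            + (α k)⁻¹ • (Matrix.toEuclideanCLM (𝕜 := ℝ) (hess j (x k j))) (x k 1 - x k j))‖ ≤
        C * (1 + 1/α k) * ∑ j ∈ Finset.Icc 2 m, ‖x k j - x k 1‖ :=
  statement15_general n m g hess hhess α hα x c C hc hcC hlb hub
end

section
/- Let n = 1, m = 2, ε > 0, f_1(x) = 1000x + εx² and f_2(x) = −1000x + εx². Then the IN iterates satisfy the explicit recursion x_1^{k+1} = (1 − α^k/(2k))·(1 − α^k/(2k−1))·x_1^k + (1000/(2ε))·(α^k/(2k))·((α^k − 1)/(2k − 1)) for all k ≥ 1. Moreover, if α^k > 1 for all k, the normalized stepsizes γ^k = α^k/k tend to 0, and for every initial point x_1^1 ∈ ℝ the iterates x_1^k converge to the optimal solution 0, then Σ_{k=1}^∞ γ^k = ∞. -/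
open Finset Filter Classical

theorem statement19 (ε : ℝ) (hε : 0 < ε)
    (α : ℕ → ℝ) (hα : ∀ k, 1 ≤ k → 0 < α k) :
    (∀ (x : ℕ → ℕ → ℝ) (H : ℕ → ℕ → ℝ),
      H 1 0 = 0 →
      (∀ k, 1 ≤ k → H (k+1) 0 = H k 2) →
      (∀ k, 1 ≤ k → H k 1 = H k 0 + 2*ε ∧ H k 2 = H k 1 + 2*ε) →
      (∀ k, 1 ≤ k →
        x k 2 = x k 1 - α k * (H k 1)⁻¹ * (1000 + 2*ε * x k 1) ∧
        x k 3 = x k 2 - α k * (H k 2)⁻¹ * (-1000 + 2*ε * x k 2) ∧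
        x (k+1) 1 = x k 3) →
      ∀ k, 1 ≤ k →
        x (k+1) 1 = (1 - α k / (2*k)) * (1 - α k / (2*(k:ℝ) - 1)) * x k 1
          + (1000/(2*ε)) * (α k / (2*k)) * ((α k - 1) / (2*(k:ℝ) - 1))) ∧
    ((∀ k, 1 ≤ k → 1 < α k) →
      Filter.Tendsto (fun k : ℕ => α k / k) Filter.atTop (nhds 0) →
      (∀ (x : ℕ → ℕ → ℝ) (H : ℕ → ℕ → ℝ),
        H 1 0 = 0 →
        (∀ k, 1 ≤ k → H (k+1) 0 = H k 2) →
        (∀ k, 1 ≤ k → H k 1 = H k 0 + 2*ε ∧ H k 2 = H k 1 + 2*ε) →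
        (∀ k, 1 ≤ k →
          x k 2 = x k 1 - α k * (H k 1)⁻¹ * (1000 + 2*ε * x k 1) ∧
          x k 3 = x k 2 - α k * (H k 2)⁻¹ * (-1000 + 2*ε * x k 2) ∧
          x (k+1) 1 = x k 3) →
        Filter.Tendsto (fun k : ℕ => x k 1) Filter.atTop (nhds 0)) →
      Filter.Tendsto (fun N : ℕ => ∑ k ∈ Finset.Icc 1 N, α k / k) Filter.atTop Filter.atTop) := by
  constructor
  · intro x H hH0 hHrec hH hx k hk
    -- closed form for H
    have key : ∀ j, 1 ≤ j → H j 1 = 2*ε*(2*(j:ℝ)-1) ∧ H j 2 = 2*ε*(2*(j:ℝ)) := by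
      intro j hj
      induction j, hj using Nat.le_induction with
      | base =>
        obtain ⟨h1, h2⟩ := hH 1 le_rfl
        constructor
        · rw [h1, hH0]; norm_num
        · rw [h2, h1, hH0]; ring
      | succ n hn ih =>
        obtain ⟨h1, h2⟩ := hH (n+1) (by omega)
        have h0 : H (n+1) 0 = H n 2 := hHrec n hn
        constructor
        · rw [h1, h0, ih.2]; push_cast; ring
        · rw [h2, h1, h0, ih.2]; push_cast; ring
    obtain ⟨h1, h2⟩ := key k hk
    obtain ⟨e2, e3, e1⟩ := hx k hk
    have hk1 : (1:ℝ) ≤ (k:ℝ) := by exact_mod_cast hk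
    have hkne : (k:ℝ) ≠ 0 := by positivity
    have h2k1 : (2*(k:ℝ) - 1) ≠ 0 := by nlinarith
    have hεne : ε ≠ 0 := ne_of_gt hε
    rw [e1, e3, e2, h1, h2]
    field_simp
    ring
  · intro hα1 _ _
    have hmono : ∀ N : ℕ, ∑ i ∈ Finset.range N, (1:ℝ)/(i+1) ≤ ∑ k ∈ Finset.Icc 1 N, α k / k := by
      intro N
      rw [← Finset.Ico_add_one_right_eq_Icc, Finset.sum_Ico_eq_sum_range]
      apply Finset.sum_le_sum
      intro i _
      have hpos : (0:ℝ) < (i:ℝ) + 1 := by positivity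
      have h1 : (1:ℝ) < α (1 + i) := hα1 (1+i) (by omega)
      have : ((1 + i : ℕ) : ℝ) = (i:ℝ) + 1 := by push_cast; ring
      rw [this]
      gcongr <;> linarith
    exact tendsto_atTop_mono hmono Real.tendsto_sum_range_one_div_nat_succ_atTop
end
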